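/- arXiv:math/0209354 — 10 statements merged into one kernel-verified Lean document; each statement's English description precedes it below -/
import Mathlib

section
/- Let n be a positive integer and let ℬ_n be the collection of up-step sets of all Dyck paths of length 2n. Then ℬ_n is the collection of bases of a matroid on {1,…,2n}; concretely, ℬ_n is nonempty, and for any A, B ∈ ℬ_n and any a ∈ A \ B there exists b ∈ B \ A such that (A \ {a}) ∪ {b} ∈ ℬ_n. -/
/-- Height of the path with up-step set `A` after `x` steps: `2·|A ∩ {1,…,x}| − x`. -/
def ht (A : Finset ℕ) (x : ℕ) : ℤ := 2 * (A ∩ Finset.Icc 1 x).card - x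

/-- `P` is the up-step set of a Dyck path of length `2n`. -/
def IsDyck (n : ℕ) (P : Finset ℕ) : Prop :=
  P ⊆ Finset.Icc 1 (2 * n) ∧ P.card = n ∧ ∀ x ≤ 2 * n, 0 ≤ ht P x

/-! Exchange `a ∈ A \ B` for the first step `b` of `B \ A`. This lowers the path of `A` by `2`
exactly on the steps `a ≤ x < b` (if `a < b`; otherwise it only raises it). For such `x`, the
up-steps of `B` among the first `x` steps form a proper subset of those of `A`, since `a` is
missing and no step of `B \ A` has occurred yet; hence `ht A x ≥ ht B x + 2 ≥ 2`. -/

open Finset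

lemma ht_insert {A : Finset ℕ} {b : ℕ} (hbA : b ∉ A) (hb : 1 ≤ b) (x : ℕ) :
    ht (insert b A) x = ht A x + if b ≤ x then 2 else 0 := by
  unfold ht
  split_ifs with hbx
  · have hbI : b ∉ A ∩ Icc 1 x := fun h => hbA (mem_inter.mp h).1
    rw [insert_inter_of_mem (mem_Icc.mpr ⟨hb, hbx⟩), card_insert_of_notMem hbI]
    push_cast
    ring
  · rw [insert_inter_of_notMem (by simp [hbx]), add_zero]

lemma ht_erase {A : Finset ℕ} {a : ℕ} (haA : a ∈ A) (ha : 1 ≤ a) (x : ℕ) :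
    ht (A.erase a) x = ht A x - if a ≤ x then 2 else 0 := by
  unfold ht
  rw [erase_inter]
  split_ifs with hax
  · have hcard := card_erase_add_one (mem_inter.mpr ⟨haA, mem_Icc.mpr ⟨ha, hax⟩⟩)
    rw [← hcard]
    push_cast
    ring
  · rw [erase_eq_of_notMem (by simp [hax]), sub_zero]

lemma ht_add_two_le_of_ssubset {A B : Finset ℕ} {x : ℕ}
    (h : B ∩ Icc 1 x ⊂ A ∩ Icc 1 x) : ht B x + 2 ≤ ht A x := by
  have := card_lt_card h
  unfold ht
  omega

lemma isDyck_Icc (n : ℕ) : IsDyck n (Icc 1 n) := by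
  refine ⟨Icc_subset_Icc le_rfl (by omega), by simp, fun x _ => ?_⟩
  have : Icc 1 n ∩ Icc 1 x = Icc 1 (min n x) := by
    ext c
    simp only [mem_inter, mem_Icc]
    omega
  rw [ht, this, Nat.card_Icc]
  omega

lemma IsDyck.sdiff_nonempty {n : ℕ} {A B : Finset ℕ} (hA : IsDyck n A) (hB : IsDyck n B)
    {a : ℕ} (ha : a ∈ A \ B) : (B \ A).Nonempty := by
  rw [Finset.sdiff_nonempty]
  intro hBA
  have : B = A := eq_of_subset_of_card_le hBA (by rw [hA.2.1, hB.2.1])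
  exact (mem_sdiff.mp ha).2 (this ▸ (mem_sdiff.mp ha).1)

lemma IsDyck.insert_erase {n : ℕ} {A : Finset ℕ} {a b : ℕ} (hA : IsDyck n A) (haA : a ∈ A)
    (hb : b ∈ Icc 1 (2 * n)) (hbA : b ∉ A)
    (hheight : ∀ x ≤ 2 * n, a ≤ x → x < b → 2 ≤ ht A x) :
    IsDyck n (insert b (A.erase a)) := by
  have ha := mem_Icc.mp (hA.1 haA)
  have hb' := mem_Icc.mp hb
  refine ⟨insert_subset hb ((erase_subset a A).trans hA.1), ?_, fun x hx => ?_⟩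
  · rw [card_insert_of_notMem (fun h => hbA (mem_of_mem_erase h)), card_erase_add_one haA,
      hA.2.1]
  · have h0 := hA.2.2 x hx
    rw [ht_insert (fun h => hbA (mem_of_mem_erase h)) hb'.1, ht_erase haA ha.1]
    by_cases hdip : a ≤ x ∧ x < b
    · have := hheight x hx hdip.1 hdip.2
      split_ifs <;> omega
    · split_ifs <;> omega

lemma inter_Icc_ssubset {A B : Finset ℕ} {a x : ℕ} (ha : a ∈ A \ B) (hax : a ∈ Icc 1 x)
    (hlt : ∀ c ∈ B \ A, x < c) : B ∩ Icc 1 x ⊂ A ∩ Icc 1 x := by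
  refine ⟨fun c hc => ?_, fun hAB => (mem_sdiff.mp ha).2 (mem_inter.mp (hAB ?_)).1⟩
  · obtain ⟨hcB, hcI⟩ := mem_inter.mp hc
    refine mem_inter.mpr ⟨?_, hcI⟩
    by_contra hcA
    have := hlt c (mem_sdiff.mpr ⟨hcB, hcA⟩)
    have := (mem_Icc.mp hcI).2
    omega
  · exact mem_inter.mpr ⟨(mem_sdiff.mp ha).1, hax⟩

theorem catalan_is_matroid_general (n : ℕ) :
    (∃ B : Finset ℕ, IsDyck n B) ∧
    ∀ A B : Finset ℕ, IsDyck n A → IsDyck n B → ∀ a ∈ A \ B,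
      ∃ b ∈ B \ A, IsDyck n (insert b (A.erase a)) := by
  refine ⟨⟨_, isDyck_Icc n⟩, fun A B hA hB a ha => ?_⟩
  set b := (B \ A).min' (hA.sdiff_nonempty hB ha)
  have hb : b ∈ B \ A := min'_mem _ _
  obtain ⟨haA, -⟩ := mem_sdiff.mp ha
  obtain ⟨hbB, hbA⟩ := mem_sdiff.mp hb
  refine ⟨b, hb, hA.insert_erase haA (hB.1 hbB) hbA fun x hx hax hxb => ?_⟩
  have hss : B ∩ Icc 1 x ⊂ A ∩ Icc 1 x :=
    inter_Icc_ssubset ha (mem_Icc.mpr ⟨(mem_Icc.mp (hA.1 haA)).1, hax⟩)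
      fun c hc => hxb.trans_le ((B \ A).min'_le c hc)
  linarith [ht_add_two_le_of_ssubset hss, hB.2.2 x hx]

/-- The collection of up-step sets of Dyck paths of length `2n` is the collection of
bases of a matroid: it is nonempty and satisfies the basis exchange axiom. -/
theorem catalan_is_matroid (n : ℕ) (hn : 0 < n) :
    (∃ B : Finset ℕ, IsDyck n B) ∧
    ∀ A B : Finset ℕ, IsDyck n A → IsDyck n B → ∀ a ∈ A \ B,
      ∃ b ∈ B \ A, IsDyck n (insert b (A.erase a)) :=
  catalan_is_matroid_general n
end

section
/- For every subset A ⊆ {1,…,2n}, the rank of A in the Catalan matroid C_n equals n + ⌊minht_A / 2⌋. -/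
/-- Minimum height of the path `A` over `0 ≤ x ≤ 2n`. -/
def minht (n : ℕ) (A : Finset ℕ) : ℤ :=
  ((Finset.range (2 * n + 1)).image (ht A)).min' (by simp)

/-!
For every `x ≤ 2n` a Dyck path `B` has at least `⌈x/2⌉` up-steps in `[1, x]`, hence at most
`n - ⌈x/2⌉` after `x`, so `|A ∩ B| ≤ |A ∩ [1, x]| + n - ⌈x/2⌉ = n + ⌊ht_A(x)/2⌋`; taking `x` where
`ht_A` is minimal gives the upper bound.

For the lower bound, turn into an up-step every position where the path of `A` first reaches one
of the heights `-1, -3, -5, …`. The resulting set `C ⊇ A` has nonnegative heights and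
`|C| = |A| + ⌈-minht_A / 2⌉`. Deleting the largest elements of `C` one at a time keeps all heights
nonnegative, and stops at a Dyck path `B ⊆ C`, which misses at most `|C| - n` elements of `A`.
-/

open Finset

section Height

variable (A : Finset ℕ)

lemma ht_zero : ht A 0 = 0 := by simp [ht]

lemma ht_succ (y : ℕ) : ht A (y + 1) = ht A y + if y + 1 ∈ A then 1 else -1 := by
  rw [ht, ht, ← insert_Icc_right_eq_Icc_add_one (by omega : 1 ≤ y + 1)]
  split_ifs with hy
  · rw [inter_insert_of_mem hy, card_insert_of_notMem (by simp)]
    push_cast; ring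
  · rw [inter_insert_of_notMem hy]
    push_cast; ring

lemma ht_of_subset_Icc {y : ℕ} (h : A ⊆ Icc 1 y) : ht A y = 2 * #A - y := by
  rw [ht, inter_eq_left.2 h]

end Height

section PrefixMin

variable (A : Finset ℕ)

def prefixMinHt (y : ℕ) : ℤ :=
  ((range (y + 1)).image (ht A)).min' (by simp)

lemma minht_eq_prefixMinHt (n : ℕ) : minht n A = prefixMinHt A (2 * n) := rfl

lemma prefixMinHt_le_ht {w y : ℕ} (h : w ≤ y) : prefixMinHt A y ≤ ht A w :=
  min'_le _ _ (mem_image_of_mem _ (mem_range.2 (by omega)))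

lemma exists_ht_eq_prefixMinHt (y : ℕ) : ∃ w ≤ y, ht A w = prefixMinHt A y := by
  obtain ⟨w, hw, he⟩ := mem_image.1 (min'_mem ((range (y + 1)).image (ht A)) (by simp))
  exact ⟨w, Nat.lt_succ_iff.1 (mem_range.1 hw), he⟩

lemma prefixMinHt_nonpos (y : ℕ) : prefixMinHt A y ≤ 0 :=
  ht_zero A ▸ prefixMinHt_le_ht A (Nat.zero_le y)

lemma prefixMinHt_zero : prefixMinHt A 0 = 0 := by
  simp [prefixMinHt, ht_zero]

lemma prefixMinHt_succ (y : ℕ) :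
    prefixMinHt A (y + 1) = min (prefixMinHt A y) (ht A (y + 1)) := by
  have h := min'_insert (ht A (y + 1)) ((range (y + 1)).image (ht A)) (by simp)
  simp only [← image_insert, ← range_add_one] at h
  exact h.trans (min_comm _ _)

end PrefixMin

theorem card_inter_le_add_ht_div_two {n : ℕ} (A : Finset ℕ) {B : Finset ℕ} (hB : IsDyck n B)
    {x : ℕ} (hx : x ≤ 2 * n) : (#(A ∩ B) : ℤ) ≤ n + ht A x / 2 := by
  obtain ⟨-, hBcard, hBht⟩ := hB
  have hsplit : #(A ∩ B) ≤ #(A ∩ Icc 1 x) + #(B \ Icc 1 x) :=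
    (card_le_card (by intro z; simp only [mem_inter, mem_union, mem_sdiff]; tauto)).trans
      (card_union_le _ _)
  have hB_split := card_sdiff_add_card_inter B (Icc 1 x)
  have hBx := hBht x hx
  unfold ht at hBx ⊢
  omega

theorem card_inter_le_add_minht_div_two {n : ℕ} (A : Finset ℕ) {B : Finset ℕ}
    (hB : IsDyck n B) : (#(A ∩ B) : ℤ) ≤ n + minht n A / 2 := by
  obtain ⟨x, hx, hmin⟩ := exists_ht_eq_prefixMinHt A (2 * n)
  rw [minht_eq_prefixMinHt, ← hmin]
  exact card_inter_le_add_ht_div_two A hB hx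

section Padding

variable (A : Finset ℕ)

def IsOddRecordLow (z : ℕ) : Prop :=
  ht A z % 2 = 1 ∧ ∀ w < z, ht A z < ht A w

instance (z : ℕ) : Decidable (IsOddRecordLow A z) := instDecidableAnd

def padding (y : ℕ) : Finset ℕ :=
  (Icc 1 y).filter (IsOddRecordLow A)

lemma padding_subset_Icc (y : ℕ) : padding A y ⊆ Icc 1 y := filter_subset _ _

lemma isOddRecordLow_succ_iff (y : ℕ) :
    IsOddRecordLow A (y + 1) ↔ ht A (y + 1) % 2 = 1 ∧ ht A (y + 1) < prefixMinHt A y := by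
  refine and_congr_right fun _ => ⟨fun h => ?_, fun h w hw => ?_⟩
  · obtain ⟨w, hw, hmin⟩ := exists_ht_eq_prefixMinHt A y
    exact hmin ▸ h w (by omega)
  · exact h.trans_le (prefixMinHt_le_ht A (by omega))

lemma padding_succ (y : ℕ) :
    padding A (y + 1) =
      if IsOddRecordLow A (y + 1) then insert (y + 1) (padding A y) else padding A y := by
  rw [padding, ← insert_Icc_right_eq_Icc_add_one (by omega : 1 ≤ y + 1), filter_insert]
  rfl

/-- `(1 - p) / 2` is the number of odd integers in `[p, -1]`. -/
lemma card_padding (y : ℕ) : (#(padding A y) : ℤ) = (1 - prefixMinHt A y) / 2 := by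
  induction y with
  | zero => simp [padding, prefixMinHt_zero]
  | succ y ih =>
    have hstep := ht_succ A y
    have hmin := prefixMinHt_le_ht A (le_refl y)
    rw [padding_succ, prefixMinHt_succ]
    by_cases hrec : IsOddRecordLow A (y + 1)
    · rw [if_pos hrec, card_insert_of_notMem (by simp [padding]), Nat.cast_succ, ih]
      rw [isOddRecordLow_succ_iff] at hrec
      split_ifs at hstep <;> omega
    · rw [if_neg hrec, ih]
      rw [isOddRecordLow_succ_iff] at hrec
      split_ifs at hstep <;> omega

lemma disjoint_padding (y : ℕ) : Disjoint A (padding A y) := by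
  refine disjoint_left.2 fun z hzA hz => ?_
  obtain ⟨⟨hz1, -⟩, -, hlow⟩ := by simpa only [padding, mem_filter, mem_Icc] using hz
  obtain ⟨x, rfl⟩ := Nat.exists_eq_add_of_le' hz1
  have := hlow x (by omega)
  rw [ht_succ, if_pos hzA] at this
  omega

lemma padding_inter_Icc {y N : ℕ} (h : y ≤ N) : padding A N ∩ Icc 1 y = padding A y := by
  rw [padding, padding, filter_inter]
  congr 1
  ext z
  simp only [mem_inter, mem_Icc]
  omega

lemma ht_union_padding {y N : ℕ} (h : y ≤ N) :
    ht (A ∪ padding A N) y = ht A y + 2 * #(padding A y) := by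
  rw [ht, ht, union_inter_distrib_right, padding_inter_Icc A h,
    card_union_of_disjoint ((disjoint_padding A y).mono_left inter_subset_left)]
  push_cast
  ring

lemma ht_union_padding_nonneg {y N : ℕ} (h : y ≤ N) : 0 ≤ ht (A ∪ padding A N) y := by
  have := prefixMinHt_le_ht A (le_refl y)
  rw [ht_union_padding A h, card_padding]
  omega

end Padding

lemma ht_erase_max'_nonneg {n : ℕ} {C : Finset ℕ} (hC : C ⊆ Icc 1 (2 * n))
    (hht : ∀ y ≤ 2 * n, 0 ≤ ht C y) (hcard : n < #C) (hne : C.Nonempty) :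
    ∀ y ≤ 2 * n, 0 ≤ ht (C.erase (C.max' hne)) y := by
  intro y hy
  by_cases hyM : y < C.max' hne
  · have hsame : C.erase (C.max' hne) ∩ Icc 1 y = C ∩ Icc 1 y := by
      ext z
      simp only [mem_inter, mem_erase, mem_Icc]
      grind
    rw [ht, hsame]
    exact hht y hy
  · have hsub : C.erase (C.max' hne) ⊆ Icc 1 y := fun z hz => by
      have h1 := mem_Icc.1 (hC (mem_of_mem_erase hz))
      have h2 := C.le_max' z (mem_of_mem_erase hz)
      exact mem_Icc.2 ⟨h1.1, by omega⟩
    rw [ht_of_subset_Icc _ hsub, card_erase_of_mem (C.max'_mem hne)]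
    omega

theorem exists_isDyck_subset {n : ℕ} {C : Finset ℕ} (hC : C ⊆ Icc 1 (2 * n))
    (hht : ∀ y ≤ 2 * n, 0 ≤ ht C y) (hcard : n ≤ #C) : ∃ B ⊆ C, IsDyck n B := by
  obtain ⟨k, hk⟩ := Nat.exists_eq_add_of_le hcard
  induction k generalizing C with
  | zero => exact ⟨C, subset_rfl, hC, hk, hht⟩
  | succ k ih =>
    have hne : C.Nonempty := card_pos.1 (by omega)
    have hcard' : #(C.erase (C.max' hne)) = n + k := by
      rw [card_erase_of_mem (C.max'_mem hne)]; omega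
    obtain ⟨B, hBC, hB⟩ := ih ((erase_subset _ _).trans hC)
      (ht_erase_max'_nonneg hC hht (by omega) hne) (by omega) hcard'
    exact ⟨B, hBC.trans (erase_subset _ _), hB⟩

theorem exists_isDyck_add_minht_div_two_le_card_inter {n : ℕ} {A : Finset ℕ}
    (hA : A ⊆ Icc 1 (2 * n)) : ∃ B, IsDyck n B ∧ n + minht n A / 2 ≤ (#(A ∩ B) : ℤ) := by
  have hmin_nonpos : minht n A ≤ 0 := prefixMinHt_nonpos A (2 * n)
  have hmin_le : minht n A ≤ 2 * #A - 2 * n :=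
    ht_of_subset_Icc A hA ▸ prefixMinHt_le_ht A le_rfl
  have hCcard : (#(A ∪ padding A (2 * n)) : ℤ) = #A + (1 - minht n A) / 2 := by
    rw [card_union_of_disjoint (disjoint_padding A _), Nat.cast_add, card_padding]
    rfl
  obtain ⟨B, hBC, hB⟩ := exists_isDyck_subset (union_subset hA (padding_subset_Icc A _))
    (fun y hy => ht_union_padding_nonneg A hy) (by omega)
  have hmiss : #(A \ B) ≤ #((A ∪ padding A (2 * n)) \ B) :=
    card_le_card (sdiff_subset_sdiff subset_union_left le_rfl)
  have hA_split := card_sdiff_add_card_inter A B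
  rw [card_sdiff_of_subset hBC, hB.2.1] at hmiss
  refine ⟨B, hB, ?_⟩
  omega

theorem catalan_rank_general (n : ℕ) (A : Finset ℕ) (hA : A ⊆ Finset.Icc 1 (2 * n)) :
    IsGreatest {m : ℤ | ∃ B : Finset ℕ, IsDyck n B ∧ ((A ∩ B).card : ℤ) = m}
      (n + minht n A / 2) := by
  obtain ⟨B, hB, hle⟩ := exists_isDyck_add_minht_div_two_le_card_inter hA
  refine ⟨⟨B, hB, le_antisymm (card_inter_le_add_minht_div_two A hB) hle⟩, ?_⟩
  rintro m ⟨B', hB', rfl⟩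
  exact card_inter_le_add_minht_div_two A hB'

/-- The rank of `A` in the Catalan matroid, i.e. the maximum of `|A ∩ B|` over bases
(Dyck paths) `B`, equals `n + ⌊minht_A / 2⌋`. -/
theorem catalan_rank (n : ℕ) (hn : 0 < n) (A : Finset ℕ) (hA : A ⊆ Finset.Icc 1 (2 * n)) :
    IsGreatest {m : ℤ | ∃ B : Finset ℕ, IsDyck n B ∧ ((A ∩ B).card : ℤ) = m}
      (n + minht n A / 2) :=
  catalan_rank_general n A hA
end

section
/- A subset A ⊆ {1,…,2n} is independent in the Catalan matroid C_n if and only if minht_A = ht_A(2n). -/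
lemma Icc_one_eq_Ioc (x : ℕ) : Finset.Icc 1 x = Finset.Ioc 0 x := by
  rw [← Finset.Icc_add_one_left_eq_Ioc]; rfl

lemma card_split (A : Finset ℕ) {x m : ℕ} (hx : x ≤ m) :
    (A ∩ Finset.Icc 1 m).card
      = (A ∩ Finset.Icc 1 x).card + (A ∩ Finset.Ioc x m).card := by
  rw [Icc_one_eq_Ioc, Icc_one_eq_Ioc, ← Finset.Ioc_union_Ioc_eq_Ioc (Nat.zero_le x) hx,
    Finset.inter_union_distrib_left]
  exact Finset.card_union_of_disjoint
    (Finset.disjoint_of_subset_left Finset.inter_subset_right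
      (Finset.disjoint_of_subset_right Finset.inter_subset_right
        (by simp [Finset.disjoint_left] ; omega)))

/-- Forward direction key inequality. -/
lemma forward_ineq (n : ℕ) (A B : Finset ℕ) (hB : IsDyck n B) (hAB : A ⊆ B)
    {x : ℕ} (hx : x ≤ 2 * n) : ht A (2 * n) ≤ ht A x := by
  obtain ⟨hBsub, hBcard, hBht⟩ := hB
  have hAsub : A ⊆ Finset.Icc 1 (2 * n) := hAB.trans hBsub
  have hAfull : A ∩ Finset.Icc 1 (2 * n) = A := Finset.inter_eq_left.mpr hAsub
  have hBfull : B ∩ Finset.Icc 1 (2 * n) = B := Finset.inter_eq_left.mpr hBsub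
  have hAcs := card_split A hx
  have hBcs := card_split B hx
  rw [hAfull] at hAcs
  rw [hBfull, hBcard] at hBcs
  have h1 : (A ∩ Finset.Ioc x (2 * n)).card ≤ (B ∩ Finset.Ioc x (2 * n)).card :=
    Finset.card_le_card (Finset.inter_subset_inter_right hAB)
  have h2 := hBht x hx
  unfold ht at h2 ⊢
  rw [hAfull]
  have h2' : (x : ℤ) ≤ 2 * (B ∩ Finset.Icc 1 x).card := by linarith
  have h2n : x ≤ 2 * (B ∩ Finset.Icc 1 x).card := by exact_mod_cast h2'
  push_cast
  push_cast [hAcs] 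
  have : 2 * ((A ∩ Finset.Ioc x (2 * n)).card : ℤ) ≤ 2 * n - x := by
    have : ((A ∩ Finset.Ioc x (2 * n)).card : ℤ) ≤ ((B ∩ Finset.Ioc x (2 * n)).card : ℤ) := by
      exact_mod_cast h1
    have hb : ((B ∩ Finset.Ioc x (2 * n)).card : ℤ)
        = (n : ℤ) - (B ∩ Finset.Icc 1 x).card := by
      have := hBcs; omega
    omega
  linarith

/-- `A` is independent in the Catalan matroid (i.e. contained in some basis)
iff `minht_A = ht_A(2n)`. -/
theorem catalan_indep (n : ℕ) (hn : 0 < n) (A : Finset ℕ) (hA : A ⊆ Finset.Icc 1 (2 * n)) :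
    (∃ B : Finset ℕ, IsDyck n B ∧ A ⊆ B) ↔ minht n A = ht A (2 * n) := by
  constructor
  · rintro ⟨B, hB, hAB⟩
    apply le_antisymm
    · exact Finset.min'_le _ _ (Finset.mem_image_of_mem _ (Finset.mem_range.mpr (by omega)))
    · apply Finset.le_min'
      intro y hy
      obtain ⟨x, hx, rfl⟩ := Finset.mem_image.mp hy
      exact forward_ineq n A B hB hAB (Nat.lt_succ_iff.mp (Finset.mem_range.mp hx))
  · intro hmin
    -- heights at all points dominate ht A (2n)
    have hle : ∀ x ≤ 2 * n, ht A (2 * n) ≤ ht A x := by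
      intro x hx
      rw [← hmin]
      exact Finset.min'_le _ _ (Finset.mem_image_of_mem _ (Finset.mem_range.mpr (by omega)))
    have hAfull : A ∩ Finset.Icc 1 (2 * n) = A := Finset.inter_eq_left.mpr hA
    have hcardA : A.card ≤ n := by
      have h0 := hle 0 (Nat.zero_le _)
      unfold ht at h0
      rw [hAfull] at h0
      simp at h0
      have : (A.card : ℤ) ≤ n := by linarith
      exact_mod_cast this
    classical
    set C := Finset.Icc 1 (2 * n) \ A with hC
    set k := n - A.card with hk
    set g : ℕ → ℕ := fun t => (C ∩ Finset.Icc 1 t).card with hg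
    have hCsub : C ⊆ Finset.Icc 1 (2 * n) := Finset.sdiff_subset
    have hCfull : C ∩ Finset.Icc 1 (2 * n) = C := Finset.inter_eq_left.mpr hCsub
    have hCcard : C.card = 2 * n - A.card := by
      rw [hC, Finset.card_sdiff_of_subset hA, Nat.card_Icc]; omega
    have hex : ∃ t, k ≤ g t := ⟨2 * n, by simp only [hg, hCfull]; omega⟩
    set t := Nat.find hex with htdef
    have ht2n : t ≤ 2 * n := Nat.find_min' hex (by simp only [hg, hCfull]; omega)
    have hstep : ∀ s, g (s + 1) ≤ g s + 1 := by
      intro s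
      have hins : Finset.Icc 1 (s + 1) = insert (s + 1) (Finset.Icc 1 s) := by
        ext y; simp [Finset.mem_Icc]; omega
      calc g (s + 1) = (C ∩ insert (s + 1) (Finset.Icc 1 s)).card := by simp only [hg]; rw [hins]
        _ ≤ (insert (s + 1) (C ∩ Finset.Icc 1 s)).card := by
            apply Finset.card_le_card; intro y; simp; tauto
        _ ≤ g s + 1 := Finset.card_insert_le _ _
    have hgt : g t = k := by
      have hkt : k ≤ g t := Nat.find_spec hex
      rcases Nat.eq_zero_or_pos t with h0 | hpos
      · have hg0 : g 0 = 0 := by simp [hg]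
        rw [h0] at hkt ⊢
        omega
      · have hmin' : ¬ k ≤ g (t - 1) := Nat.find_min hex (by omega)
        have := hstep (t - 1)
        rw [Nat.sub_add_cancel hpos] at this
        omega
    set S := C ∩ Finset.Icc 1 t with hS
    have hdisj : Disjoint A S := by
      have : Disjoint A C := Finset.sdiff_disjoint.symm
      exact this.mono_right Finset.inter_subset_left
    refine ⟨A ∪ S, ⟨?_, ?_, ?_⟩, Finset.subset_union_left⟩
    · exact Finset.union_subset hA (Finset.inter_subset_left.trans hCsub)
    · rw [Finset.card_union_of_disjoint hdisj]
      have : S.card = k := hgt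
      omega
    · intro x hx
      by_cases hxt : x ≤ t
      · have hfull : (A ∪ S) ∩ Finset.Icc 1 x = Finset.Icc 1 x := by
          apply Finset.inter_eq_right.mpr
          intro y hy
          rw [Finset.mem_Icc] at hy
          by_cases hyA : y ∈ A
          · exact Finset.mem_union_left _ hyA
          · refine Finset.mem_union_right _ ?_
            rw [hS, Finset.mem_inter, hC, Finset.mem_sdiff, Finset.mem_Icc, Finset.mem_Icc]
            exact ⟨⟨⟨hy.1, hy.2.trans hx⟩, hyA⟩, hy.1, hy.2.trans hxt⟩
        unfold ht
        rw [hfull, Nat.card_Icc]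
        push_cast
        omega
      · push_neg at hxt
        have hSx : S ⊆ Finset.Icc 1 x :=
          Finset.inter_subset_right.trans (Finset.Icc_subset_Icc_right hxt.le)
        have hsplit : (A ∪ S) ∩ Finset.Icc 1 x = (A ∩ Finset.Icc 1 x) ∪ S := by
          rw [Finset.union_inter_distrib_right, Finset.inter_eq_left.mpr hSx]
        have hd2 : Disjoint (A ∩ Finset.Icc 1 x) S := hdisj.mono_left Finset.inter_subset_left
        have hcard : ((A ∪ S) ∩ Finset.Icc 1 x).card = (A ∩ Finset.Icc 1 x).card + k := by
          rw [hsplit, Finset.card_union_of_disjoint hd2]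
          have hScard : S.card = k := hgt
          omega
        have hkey := hle x hx
        unfold ht at hkey ⊢
        rw [hAfull] at hkey
        rw [hcard]
        push_cast
        push_cast at hkey
        omega
end

section
/- A subset A ⊆ {1,…,2n} is a circuit of the Catalan matroid C_n if and only if A = {2k, 2k + b_1, …, 2k + b_{n−k}} for some positive integer k ≤ n and some Dyck path {b_1, …, b_{n−k}} of length 2(n−k). -/
/-- `A` is independent in the Catalan matroid: it is contained in some basis. -/
def CatalanIndep (n : ℕ) (A : Finset ℕ) : Prop :=
  ∃ B : Finset ℕ, IsDyck n B ∧ A ⊆ B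

/-- `A` is a circuit of the Catalan matroid: a minimal dependent subset of the ground set. -/
def IsCatalanCircuit (n : ℕ) (A : Finset ℕ) : Prop :=
  A ⊆ Finset.Icc 1 (2 * n) ∧ ¬ CatalanIndep n A ∧ ∀ A' ⊂ A, CatalanIndep n A'

/-!
A set `A` is independent exactly when it lies in the ground set, `|A| ≤ n`, and
`ht A x ≥ 2|A| - 2n` for every `x ≤ 2n`. The bound is necessary because the `n - |A|` missing
up-steps raise each height by at most `2 (n - |A|)`; it is sufficient because they can be put
greedily at the first free positions: each raises the heights after it by 2, and before it the
path only goes up.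

Write a nonempty `A` as `{a} ∪ (a + b)` with `a = min A`. If `A` is a circuit, the independence
of `a + b` gives `a ≤ 2 (n - |b|)`, and if the inequality were strict the up-step `a` could be
added, so `a = 2k` with `k = n - |b|`; the bound for `a + b` after step `2k` then says that `b`
is a Dyck path. Conversely, such a set is dependent because its path sinks to `1 - 2k` before
its first up-step, while deleting any element lowers the bound `2|A| - 2n` by 2, which absorbs
both that dip and the loss of one up-step later on.
-/

open Finset

section Height

variable {A B : Finset ℕ} {x : ℕ}

lemma ht_of_forall_lt (h : ∀ a ∈ A, x < a) : ht A x = -x := by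
  have hempty : A ∩ Icc 1 x = ∅ := by
    ext a
    simp only [mem_inter, mem_Icc, notMem_empty, iff_false, not_and]
    intro ha _ hax
    exact absurd (h a ha) (by omega)
  simp [ht, hempty]

lemma ht_of_Icc_subset (h : Icc 1 x ⊆ A) : ht A x = x := by
  rw [ht, inter_eq_right.2 h, Nat.card_Icc]
  push_cast
  ring

lemma ht_insert_of_le {a : ℕ} (ha : a ∉ A) (ha₁ : 1 ≤ a) (hax : a ≤ x) :
    ht (insert a A) x = ht A x + 2 := by
  rw [ht, ht, insert_inter_of_mem (mem_Icc.2 ⟨ha₁, hax⟩),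
    card_insert_of_notMem fun h => ha (mem_inter.1 h).1]
  push_cast
  ring

lemma ht_le_of_subset (h : A ⊆ B) : ht B x ≤ ht A x + 2 * ((B.card : ℤ) - A.card) := by
  have hsdiff : (B ∩ Icc 1 x) \ (A ∩ Icc 1 x) ⊆ B \ A := fun z hz => by
    simp only [mem_sdiff, mem_inter] at hz ⊢
    tauto
  have hcard := (card_le_card_sdiff_add_card (s := B ∩ Icc 1 x) (t := A ∩ Icc 1 x)).trans
    (Nat.add_le_add_right (card_le_card hsdiff) _)
  rw [card_sdiff_of_subset h] at hcard
  have := card_le_card h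
  simp only [ht]
  omega

lemma ht_image_add {b : Finset ℕ} (hb : ∀ t ∈ b, 0 < t) (c y : ℕ) :
    ht (b.image (c + ·)) (c + y) = ht b y - c := by
  have himage : b.image (c + ·) ∩ Icc 1 (c + y) = (b ∩ Icc 1 y).image (c + ·) := by
    ext z
    simp only [mem_inter, mem_image, mem_Icc]
    constructor
    · rintro ⟨⟨t, hmem, rfl⟩, -, hle⟩
      exact ⟨t, ⟨hmem, hb t hmem, by omega⟩, rfl⟩
    · rintro ⟨t, ⟨hmem, h₁, hle⟩, rfl⟩
      exact ⟨⟨t, hmem, rfl⟩, by omega, by omega⟩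
  rw [ht, ht, himage, card_image_of_injective _ (add_right_injective c)]
  push_cast
  ring

end Height

section Independence

variable {n : ℕ} {A : Finset ℕ}

lemma exists_insert_ht_bound (hcard : A.card < n)
    (hht : ∀ x ≤ 2 * n, 2 * (A.card : ℤ) - 2 * n ≤ ht A x) :
    ∃ e ∈ Icc 1 (2 * n) \ A, ∀ x ≤ 2 * n, 2 * ((A.card : ℤ) + 1) - 2 * n ≤ ht (insert e A) x := by
  have hne : (Icc 1 (2 * n) \ A).Nonempty := by
    rw [sdiff_nonempty]
    intro hsub
    have := card_le_card hsub
    rw [Nat.card_Icc] at this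
    omega
  refine ⟨_, min'_mem _ hne, fun x hx => ?_⟩
  set e := (Icc 1 (2 * n) \ A).min' hne
  obtain ⟨he, heA⟩ := mem_sdiff.1 (min'_mem _ hne)
  by_cases hex : e ≤ x
  · rw [ht_insert_of_le heA (mem_Icc.1 he).1 hex]
    linarith [hht x hx]
  · have hIcc : Icc 1 x ⊆ insert e A := fun y hy => by
      by_contra hy'
      have := min'_le _ y
        (mem_sdiff.2 ⟨Icc_subset_Icc_right hx hy, fun h => hy' (mem_insert_of_mem h)⟩)
      have := (mem_Icc.1 hy).2
      omega
    rw [ht_of_Icc_subset hIcc]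
    omega

lemma exists_isDyck_superset (hA : A ⊆ Icc 1 (2 * n)) (hcard : A.card ≤ n)
    (hht : ∀ x ≤ 2 * n, 2 * (A.card : ℤ) - 2 * n ≤ ht A x) : ∃ B, IsDyck n B ∧ A ⊆ B := by
  induction hd : n - A.card generalizing A with
  | zero =>
    have hn : A.card = n := by omega
    subst hn
    exact ⟨A, ⟨hA, rfl, fun x hx => by linarith [hht x hx]⟩, subset_rfl⟩
  | succ d ih =>
    obtain ⟨e, he, hht'⟩ := exists_insert_ht_bound (by omega) hht
    obtain ⟨heIcc, heA⟩ := mem_sdiff.1 he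
    have hcard' := card_insert_of_notMem heA
    obtain ⟨B, hB, hAB⟩ :=
      ih (insert_subset heIcc hA) (by omega) (by rwa [hcard', Nat.cast_succ]) (by omega)
    exact ⟨B, hB, (subset_insert e A).trans hAB⟩

lemma catalanIndep_iff : CatalanIndep n A ↔
    A ⊆ Icc 1 (2 * n) ∧ A.card ≤ n ∧ ∀ x ≤ 2 * n, 2 * (A.card : ℤ) - 2 * n ≤ ht A x := by
  refine ⟨?_, fun ⟨hA, hcard, hht⟩ => exists_isDyck_superset hA hcard hht⟩
  rintro ⟨B, ⟨hB, hBcard, hBht⟩, hAB⟩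
  have hcard := card_le_card hAB
  refine ⟨hAB.trans hB, hBcard ▸ hcard, fun x hx => ?_⟩
  have := ht_le_of_subset (x := x) hAB
  have := hBht x hx
  omega

lemma catalanIndep_empty : CatalanIndep n ∅ :=
  catalanIndep_iff.2 ⟨empty_subset _, by simp, fun x hx => by
    rw [ht_of_forall_lt (by simp)]
    simp only [card_empty]
    omega⟩

lemma catalanIndep_insert {c : ℕ} (hA : CatalanIndep n A) (hc : 1 ≤ c) (hlt : ∀ t ∈ A, c < t)
    (hcn : c + 2 * A.card < 2 * n) : CatalanIndep n (insert c A) := by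
  obtain ⟨hsub, -, hht⟩ := catalanIndep_iff.1 hA
  have hcA : c ∉ A := fun h => (hlt c h).false
  refine catalanIndep_iff.2 ⟨insert_subset (mem_Icc.2 ⟨hc, by omega⟩) hsub, ?_, fun x hx => ?_⟩
  · rw [card_insert_of_notMem hcA]
    omega
  rw [card_insert_of_notMem hcA]
  by_cases hcx : c ≤ x
  · rw [ht_insert_of_le hcA hc hcx]
    push_cast
    linarith [hht x hx]
  · rw [ht_of_forall_lt fun t hmem => ?_]
    · omega
    · rcases mem_insert.1 hmem with rfl | hmem
      · omega
      · exact (hlt t hmem).trans' (by omega)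

end Independence

section Circuits

variable {n : ℕ} {A b : Finset ℕ}

lemma exists_eq_insert_min'_image_add (hA : A.Nonempty) :
    ∃ b : Finset ℕ, (∀ t ∈ b, 0 < t) ∧ A = insert (A.min' hA) (b.image (A.min' hA + ·)) := by
  set a := A.min' hA
  have hlt : ∀ t ∈ A.erase a, a < t := fun t hmem =>
    (min'_le A t (mem_of_mem_erase hmem)).lt_of_ne (ne_of_mem_erase hmem).symm
  refine ⟨(A.erase a).image (· - a), ?_, ?_⟩
  · simp only [mem_image]
    rintro _ ⟨t, hmem, rfl⟩
    exact Nat.sub_pos_of_lt (hlt t hmem)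
  · rw [image_image,
      image_congr (g := id) fun t hmem => by simp [Nat.add_sub_cancel' (hlt t hmem).le],
      image_id, insert_erase (min'_mem A hA)]

lemma notMem_image_add_self (hb : ∀ t ∈ b, 0 < t) (c : ℕ) : c ∉ b.image (c + ·) := by
  simp only [mem_image, not_exists, not_and]
  intro t hmem h
  have := hb t hmem
  omega

lemma card_insert_image_add (hb : ∀ t ∈ b, 0 < t) (c : ℕ) :
    (insert c (b.image (c + ·))).card = b.card + 1 := by
  rw [card_insert_of_notMem (notMem_image_add_self hb c),
    card_image_of_injective _ (add_right_injective c)]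

lemma exists_isDyck_of_isCatalanCircuit (h : IsCatalanCircuit n A) :
    ∃ k, 0 < k ∧ k ≤ n ∧ ∃ b, IsDyck (n - k) b ∧ A = insert (2 * k) (b.image (2 * k + ·)) := by
  obtain ⟨hA, hdep, hmin⟩ := h
  have hne : A.Nonempty := nonempty_iff_ne_empty.2 fun h => hdep (h ▸ catalanIndep_empty)
  have ha := mem_Icc.1 (hA (min'_mem A hne))
  obtain ⟨b, hb, hAb⟩ := exists_eq_insert_min'_image_add hne
  set a := A.min' hne
  have hindep : CatalanIndep n (b.image (a + ·)) :=
    hmin _ (hAb ▸ ssubset_insert (notMem_image_add_self hb a))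
  obtain ⟨hsub, -, hht⟩ := catalanIndep_iff.1 hindep
  rw [card_image_of_injective _ (add_right_injective a)] at hht
  have hhtb : ∀ y ≤ 2 * n - a, 2 * (b.card : ℤ) - 2 * n + a ≤ ht b y := fun y hy => by
    have := hht (a + y) (by omega)
    rw [ht_image_add hb] at this
    omega
  have hle : a + 2 * b.card ≤ 2 * n := by
    have := hhtb 0 (Nat.zero_le _)
    rw [ht_of_forall_lt hb] at this
    omega
  have heq : a + 2 * b.card = 2 * n := by
    by_contra hstrict
    refine hdep (hAb ▸ catalanIndep_insert hindep ha.1 (fun t hmem => ?_) ?_)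
    · obtain ⟨s, hs, rfl⟩ := mem_image.1 hmem
      exact Nat.lt_add_of_pos_right (hb s hs)
    · rw [card_image_of_injective _ (add_right_injective a)]
      omega
  refine ⟨n - b.card, by omega, by omega, b, ⟨fun t hmem => ?_, by omega, fun y hy => ?_⟩, ?_⟩
  · have := mem_Icc.1 (hsub (mem_image_of_mem _ hmem))
    exact mem_Icc.2 ⟨hb t hmem, by omega⟩
  · have := hhtb y (by omega)
    omega
  · rwa [show 2 * (n - b.card) = a by omega]

lemma isCatalanCircuit_insert_image_add {k : ℕ} (hk : 0 < k) (hkn : k ≤ n) (hb : IsDyck (n - k) b) :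
    IsCatalanCircuit n (insert (2 * k) (b.image (2 * k + ·))) := by
  obtain ⟨hbsub, hbcard, hbht⟩ := hb
  have hbpos : ∀ t ∈ b, 0 < t := fun t hmem => (mem_Icc.1 (hbsub hmem)).1
  set A := insert (2 * k) (b.image (2 * k + ·))
  have hcard : A.card = n - k + 1 := by rw [card_insert_image_add hbpos, hbcard]
  have hAsub : A ⊆ Icc 1 (2 * n) := insert_subset (mem_Icc.2 ⟨by omega, by omega⟩) fun a ha => by
    obtain ⟨t, hmem, rfl⟩ := mem_image.1 ha
    have := mem_Icc.1 (hbsub hmem)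
    exact mem_Icc.2 ⟨by omega, by omega⟩
  have hge : ∀ a ∈ A, 2 * k ≤ a := by
    simp only [A, mem_insert, mem_image]
    rintro _ (rfl | ⟨t, -, rfl⟩) <;> omega
  have hhtA : ∀ y, ht A (2 * k + y) = ht b y - 2 * k + 2 := fun y => by
    rw [ht_insert_of_le (notMem_image_add_self hbpos _) (by omega) (by omega), ht_image_add hbpos]
    push_cast
    ring
  refine ⟨hAsub, fun hind => ?_, fun A' hA' => ?_⟩
  · obtain ⟨-, -, hht⟩ := catalanIndep_iff.1 hind
    have := hht (2 * k - 1) (by omega)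
    rw [ht_of_forall_lt fun a ha => by have := hge a ha; omega, hcard] at this
    omega
  · have hsub := hA'.subset
    have hlt := card_lt_card hA'
    refine catalanIndep_iff.2 ⟨hsub.trans hAsub, by omega, fun x hx => ?_⟩
    by_cases hxk : x < 2 * k
    · rw [ht_of_forall_lt fun a ha => by have := hge a (hsub ha); omega]
      omega
    · obtain ⟨y, rfl⟩ := Nat.exists_eq_add_of_le (not_lt.1 hxk)
      have := ht_le_of_subset (x := 2 * k + y) hsub
      rw [hhtA, hcard] at this
      have := hbht y (by omega)
      omega

end Circuits

theorem catalan_circuits_general (n : ℕ) (A : Finset ℕ) :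
    IsCatalanCircuit n A ↔
      ∃ k : ℕ, 0 < k ∧ k ≤ n ∧ ∃ b : Finset ℕ, IsDyck (n - k) b ∧
        A = insert (2 * k) (b.image (fun x => 2 * k + x)) := by
  refine ⟨exists_isDyck_of_isCatalanCircuit, ?_⟩
  rintro ⟨k, hk, hkn, b, hb, rfl⟩
  exact isCatalanCircuit_insert_image_add hk hkn hb

/-- The circuits of the Catalan matroid are the sets `{2k, 2k + b_1, …, 2k + b_{n−k}}`
for a positive integer `k ≤ n` and a Dyck path `{b_1, …, b_{n−k}}` of length `2(n−k)`. -/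
theorem catalan_circuits (n : ℕ) (hn : 0 < n) (A : Finset ℕ)
    (hA : A ⊆ Finset.Icc 1 (2 * n)) :
    IsCatalanCircuit n A ↔
      ∃ k : ℕ, 0 < k ∧ k ≤ n ∧ ∃ b : Finset ℕ, IsDyck (n - k) b ∧
        A = insert (2 * k) (b.image (fun x => 2 * k + x)) :=
  catalan_circuits_general n A
end

section
/- Fix the linear order 1 < 2 < ⋯ < 2n on the ground set of the Catalan matroid C_n. For any basis B of C_n, the internal activity i(B) (the number of elements i ∈ B such that i is the smallest element of the unique cocircuit contained in ({1,…,2n} \ B) ∪ {i}) equals a(B), the number of up-steps that the Dyck path B takes before its first down-step, i.e., the largest k ≥ 0 with {1,…,k} ⊆ B. -/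
/-- `A` is independent in the dual of the Catalan matroid: it is contained in the
complement of some basis. -/
def CatalanCoindep (n : ℕ) (A : Finset ℕ) : Prop :=
  ∃ B : Finset ℕ, IsDyck n B ∧ A ⊆ Finset.Icc 1 (2 * n) \ B

/-- A cocircuit (bond) of the Catalan matroid: a minimal subset of the ground set not
contained in the complement of any basis. -/
def IsCatalanCocircuit (n : ℕ) (A : Finset ℕ) : Prop :=
  A ⊆ Finset.Icc 1 (2 * n) ∧ ¬ CatalanCoindep n A ∧ ∀ A' ⊂ A, CatalanCoindep n A'

/-- `i` is internally active with respect to the basis `B` (for the order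
`1 < 2 < ⋯ < 2n`): `i ∈ B` and `i` is the smallest element of the unique cocircuit
contained in `({1,…,2n} \ B) ∪ {i}`. -/
def InternallyActive (n : ℕ) (B : Finset ℕ) (i : ℕ) : Prop :=
  i ∈ B ∧ ∃ D : Finset ℕ, IsCatalanCocircuit n D ∧
    D ⊆ insert i (Finset.Icc 1 (2 * n) \ B) ∧ i ∈ D ∧ ∀ d ∈ D, i ≤ d

open Finset

theorem card_inter_Icc_le_card_insert_erase_inter_Icc {A : Finset ℕ} {i j : ℕ}
    (hj : 1 ≤ j) (hji : j ≤ i) (hjA : j ∉ A) (x : ℕ) :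
    (A ∩ Icc 1 x).card ≤ (insert j (A.erase i) ∩ Icc 1 x).card := by
  refine card_le_card_of_injOn (fun z => if z = i then j else z) ?_ ?_
  · intro z hz
    simp only [coe_inter, Set.mem_inter_iff, mem_coe, mem_Icc] at hz ⊢
    split_ifs with hzi
    · exact ⟨mem_insert_self _ _, hj, by omega⟩
    · exact ⟨mem_insert_of_mem (mem_erase.2 ⟨hzi, hz.1⟩), hz.2⟩
  · intro z₁ hz₁ z₂ hz₂ h
    simp only [coe_inter, Set.mem_inter_iff, mem_coe] at hz₁ hz₂
    grind

/-- Moving an up-step of a Dyck path earlier only raises the path. -/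
theorem IsDyck.insert_erase_s7 {n : ℕ} {P : Finset ℕ} (hP : IsDyck n P) {i j : ℕ}
    (hi : i ∈ P) (hj : j ∉ P) (hj₁ : 1 ≤ j) (hji : j ≤ i) :
    IsDyck n (insert j (P.erase i)) := by
  obtain ⟨hsub, hcard, hht⟩ := hP
  have hi₂ : i ≤ 2 * n := (mem_Icc.1 (hsub hi)).2
  refine ⟨?_, ?_, fun x hx => ?_⟩
  · exact insert_subset (mem_Icc.2 ⟨hj₁, by omega⟩) ((erase_subset _ _).trans hsub)
  · rw [card_insert_of_notMem fun h => hj (mem_of_mem_erase h), card_erase_of_mem hi]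
    have := card_pos.2 ⟨i, hi⟩
    omega
  · have hle := card_inter_Icc_le_card_insert_erase_inter_Icc hj₁ hji hj x
    have := hht x hx
    unfold ht at this ⊢
    omega

theorem CatalanCoindep.mono {n : ℕ} {A A' : Finset ℕ} (hA : CatalanCoindep n A) (h : A' ⊆ A) :
    CatalanCoindep n A' :=
  let ⟨B, hB, hAB⟩ := hA
  ⟨B, hB, h.trans hAB⟩

theorem IsDyck.card_sdiff {n : ℕ} {B : Finset ℕ} (hB : IsDyck n B) :
    (Icc 1 (2 * n) \ B).card = n := by
  rw [card_sdiff_of_subset hB.1, Nat.card_Icc, hB.2.1]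
  omega

theorem CatalanCoindep.card_le {n : ℕ} {A : Finset ℕ} (hA : CatalanCoindep n A) : A.card ≤ n :=
  let ⟨_, hB, hAB⟩ := hA
  (card_le_card hAB).trans hB.card_sdiff.le

theorem exists_isCatalanCocircuit_subset {n : ℕ} {A : Finset ℕ} (hA : A ⊆ Icc 1 (2 * n))
    (hdep : ¬ CatalanCoindep n A) : ∃ D ⊆ A, IsCatalanCocircuit n D := by
  obtain ⟨D, ⟨hDA, hD⟩, hmin⟩ :=
    wellFounded_lt.has_min {D : Finset ℕ | D ⊆ A ∧ ¬ CatalanCoindep n D} ⟨A, subset_rfl, hdep⟩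
  refine ⟨D, hDA, hDA.trans hA, hD, fun D' hD' => ?_⟩
  by_contra hD'dep
  exact hmin D' ⟨hD'.1.trans hDA, hD'dep⟩ hD'

section

variable {n : ℕ} {B : Finset ℕ} {i : ℕ}

/-- If `j < i` were a down-step, exchanging the up-step `i` for `j` would give a Dyck path
avoiding the cocircuit. -/
theorem IsDyck.Icc_subset_of_internallyActive (hB : IsDyck n B) (h : InternallyActive n B i) :
    Icc 1 i ⊆ B := by
  obtain ⟨hiB, D, ⟨hD, hdep, -⟩, hDsub, -, hmin⟩ := h
  intro j hj
  obtain ⟨hj₁, hji⟩ := mem_Icc.1 hj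
  by_contra hjB
  refine hdep ⟨_, hB.insert_erase_s7 hiB hjB hj₁ hji, fun d hd => mem_sdiff.2 ⟨hD hd, ?_⟩⟩
  have hid := hmin d hd
  have hne : j ≠ i := fun h => hjB (h ▸ hiB)
  rcases mem_insert.1 (hDsub hd) with rfl | hdC
  · simpa using hne.symm
  · have := (mem_sdiff.1 hdC).2
    simp only [mem_insert, mem_erase, not_or, not_and]
    exact ⟨by omega, fun _ => this⟩

/-- A minimal dependent subset of the `n + 1` elements `{i} ∪ ({1,…,2n} \ B)` must contain `i`,
and every other element of it is a down-step, hence lies after `i`. -/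
theorem IsDyck.internallyActive_of_Icc_subset (hB : IsDyck n B) (hi : 1 ≤ i)
    (hiB : Icc 1 i ⊆ B) : InternallyActive n B i := by
  have hiB' : i ∈ B := hiB (mem_Icc.2 ⟨hi, le_rfl⟩)
  set C := Icc 1 (2 * n) \ B
  have hCcoindep : CatalanCoindep n C := ⟨B, hB, subset_rfl⟩
  have hiC : i ∉ C := fun h => (mem_sdiff.1 h).2 hiB'
  have hdep : ¬ CatalanCoindep n (insert i C) := fun h => by
    have := h.card_le
    rw [card_insert_of_notMem hiC, hB.card_sdiff] at this
    omega
  obtain ⟨D, hDsub, hD⟩ :=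
    exists_isCatalanCocircuit_subset (insert_subset (hB.1 hiB') sdiff_subset) hdep
  have hiD : i ∈ D := by
    by_contra hiD
    exact hD.2.1 (hCcoindep.mono fun d hd => (mem_insert.1 (hDsub hd)).resolve_left
      (fun h => hiD (h ▸ hd)))
  refine ⟨hiB', D, hD, hDsub, hiD, fun d hd => ?_⟩
  rcases mem_insert.1 (hDsub hd) with rfl | hdC
  · exact le_rfl
  · obtain ⟨hd₂, hdB⟩ := mem_sdiff.1 hdC
    by_contra hdi
    exact hdB (hiB (mem_Icc.2 ⟨(mem_Icc.1 hd₂).1, by omega⟩))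

theorem IsDyck.internallyActive_iff (hB : IsDyck n B) :
    InternallyActive n B i ↔ 1 ≤ i ∧ Icc 1 i ⊆ B :=
  ⟨fun h => ⟨(mem_Icc.1 (hB.1 h.1)).1, hB.Icc_subset_of_internallyActive h⟩,
    fun h => hB.internallyActive_of_Icc_subset h.1 h.2⟩

end

theorem ncard_setOf_Icc_subset (B : Finset ℕ) :
    {i : ℕ | 1 ≤ i ∧ Icc 1 i ⊆ B}.ncard = sSup {k : ℕ | Icc 1 k ⊆ B} := by
  set S := {k : ℕ | Icc 1 k ⊆ B}
  have hbdd : BddAbove S := ⟨B.card, fun k hk => by simpa using card_le_card hk⟩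
  have hmem : sSup S ∈ S := Nat.sSup_mem ⟨0, by simp [S]⟩ hbdd
  have : {i : ℕ | 1 ≤ i ∧ Icc 1 i ⊆ B} = ↑(Icc 1 (sSup S)) := by
    ext i
    simp only [Set.mem_ofPred_eq, coe_Icc, Set.mem_Icc]
    exact ⟨fun h => ⟨h.1, le_csSup hbdd h.2⟩,
      fun h => ⟨h.1, (Icc_subset_Icc_right h.2).trans hmem⟩⟩
  rw [this, Set.ncard_coe_finset, Nat.card_Icc, Nat.add_sub_cancel]

theorem catalan_internal_activity_general (n : ℕ) (B : Finset ℕ) (hB : IsDyck n B) :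
    {i : ℕ | InternallyActive n B i}.ncard =
      sSup {k : ℕ | Finset.Icc 1 k ⊆ B} := by
  simp_rw [hB.internallyActive_iff]
  exact ncard_setOf_Icc_subset B

/-- For any basis `B` of the Catalan matroid, the internal activity of `B` equals the
number of up-steps that the Dyck path `B` takes before its first down-step, i.e. the
largest `k ≥ 0` with `{1,…,k} ⊆ B`. -/
theorem catalan_internal_activity (n : ℕ) (hn : 0 < n) (B : Finset ℕ) (hB : IsDyck n B) :
    {i : ℕ | InternallyActive n B i}.ncard =
      sSup {k : ℕ | Finset.Icc 1 k ⊆ B} :=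
  catalan_internal_activity_general n B hB
end

section
/- The Tutte polynomial of the Catalan matroid equals the generating function of Dyck paths by the statistics a and b: as polynomials in ℤ[q,t], Σ_{A ⊆ {1,…,2n}} (q−1)^{r({1,…,2n}) − r(A)} (t−1)^{|A| − r(A)} = Σ_{P Dyck path of length 2n} q^{a(P)} t^{b(P)}, where r denotes the rank function of C_n. -/
open MvPolynomial

/-- The rank of `A` in the Catalan matroid: the maximum of `|A ∩ B|` over bases `B`. -/
noncomputable def catalanRank (n : ℕ) (A : Finset ℕ) : ℕ :=
  sSup {m : ℕ | ∃ B : Finset ℕ, IsDyck n B ∧ (A ∩ B).card = m}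

/-- `a(P)`: the number of up-steps `P` takes before its first down-step, i.e. the
largest `k ≥ 0` with `{1,…,k} ⊆ P`. -/
noncomputable def statA (P : Finset ℕ) : ℕ :=
  sSup {k : ℕ | Finset.Icc 1 k ⊆ P}

/-- `b(P)`: the number of `x ∈ {1,…,2n}` with `ht_P(x) = 0`. -/
def statB (n : ℕ) (P : Finset ℕ) : ℕ :=
  ((Finset.Icc 1 (2 * n)).filter (fun x => ht P x = 0)).card

open Finset

namespace CatalanTutte

variable {n m x k : ℕ} {A B P Q : Finset ℕ}

lemma ht_zero (P : Finset ℕ) : ht P 0 = 0 := by simp [ht]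

lemma ht_succ (P : Finset ℕ) (x : ℕ) :
    ht P (x + 1) = ht P x + if x + 1 ∈ P then 1 else -1 := by
  have hIcc : Icc 1 (x + 1) = insert (x + 1) (Icc 1 x) := by
    ext y; simp only [mem_Icc, mem_insert]; omega
  unfold ht
  rw [hIcc]
  split_ifs with hx
  · rw [inter_insert_of_mem hx, card_insert_of_notMem (by simp)]
    push_cast; ring
  · rw [inter_insert_of_notMem hx]
    push_cast; ring

lemma ht_sub_one_of_mem (h0 : 0 < x) (hx : x ∈ P) : ht P (x - 1) + 1 = ht P x := by
  have := ht_succ P (x - 1)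
  rw [Nat.sub_add_cancel h0, if_pos hx] at this
  omega

lemma ht_sub_one_of_notMem (h0 : 0 < x) (hx : x ∉ P) : ht P (x - 1) = ht P x + 1 := by
  have := ht_succ P (x - 1)
  rw [Nat.sub_add_cancel h0, if_neg hx] at this
  omega

lemma ht_eq_self_iff : ht P x = x ↔ Icc 1 x ⊆ P := by
  have hle : #(P ∩ Icc 1 x) ≤ #(Icc 1 x) := card_le_card inter_subset_right
  rw [Nat.card_Icc, add_tsub_cancel_right] at hle
  rw [← inter_eq_right, ht]
  constructor
  · intro h
    refine eq_of_subset_of_card_le inter_subset_right ?_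
    rw [Nat.card_Icc, add_tsub_cancel_right]
    omega
  · intro h
    rw [h, Nat.card_Icc, add_tsub_cancel_right]
    ring

lemma ht_of_subset (hP : P ⊆ Icc 1 m) : ht P m = 2 * #P - m := by
  rw [ht, inter_eq_left.2 hP]

lemma eq_of_ht_eq (hP : P ⊆ Icc 1 m) (hQ : Q ⊆ Icc 1 m) (h : ∀ x ≤ m, ht P x = ht Q x) :
    P = Q := by
  have key : ∀ {P Q : Finset ℕ}, P ⊆ Icc 1 m → (∀ x ≤ m, ht P x = ht Q x) → P ⊆ Q := by
    intro P Q hP h x hx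
    obtain ⟨h1, h2⟩ := mem_Icc.1 (hP hx)
    by_contra hxQ
    have := ht_sub_one_of_mem h1 hx
    have := ht_sub_one_of_notMem h1 hxQ
    have := h x h2
    have := h (x - 1) (by omega)
    omega
  exact Subset.antisymm (key hP h) (key hQ fun x hx => (h x hx).symm)

lemma bddAbove_setOf_Icc_subset (P : Finset ℕ) : BddAbove {k | Icc 1 k ⊆ P} :=
  ⟨#P, fun k hk => by simpa using card_le_card hk⟩

lemma le_statA_iff : k ≤ statA P ↔ Icc 1 k ⊆ P := by
  refine ⟨fun hk => ?_, fun hk => le_csSup (bddAbove_setOf_Icc_subset P) hk⟩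
  exact (Icc_subset_Icc_right hk).trans
    (Nat.sSup_mem ⟨0, by simp⟩ (bddAbove_setOf_Icc_subset P))

def returns (n : ℕ) (P : Finset ℕ) : Finset ℕ := {x ∈ Icc 1 (2 * n) | ht P x = 0}

lemma mem_returns : x ∈ returns n P ↔ (1 ≤ x ∧ x ≤ 2 * n) ∧ ht P x = 0 := by
  rw [returns, mem_filter, mem_Icc]

lemma card_returns : #(returns n P) = statB n P := rfl

lemma notMem_of_mem_returns (hP : IsDyck n P) (hx : x ∈ returns n P) : x ∉ P := by
  obtain ⟨⟨h1, h2⟩, h0⟩ := mem_returns.1 hx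
  intro hxP
  have := ht_sub_one_of_mem h1 hxP
  have := hP.2.2 (x - 1) (by omega)
  omega

/-- The height at `x - 1` of the canonical path, given its height `h` at `x`. -/
def prevHeight (A : Finset ℕ) (x h : ℕ) : ℕ :=
  if h = x then x - 1 else if x ∈ A ∧ 0 < h then h - 1 else h + 1

/-- `revHeight n A k` is the height of the canonical path of `A` at `2n - k`. -/
def revHeight (n : ℕ) (A : Finset ℕ) : ℕ → ℕ
  | 0 => 0
  | k + 1 => prevHeight A (2 * n - k) (revHeight n A k)

def canonicalHeight (n : ℕ) (A : Finset ℕ) (x : ℕ) : ℕ := revHeight n A (2 * n - x)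

def canonicalPath (n : ℕ) (A : Finset ℕ) : Finset ℕ :=
  {x ∈ Icc 1 (2 * n) | canonicalHeight n A (x - 1) < canonicalHeight n A x}

lemma revHeight_le (hk : k ≤ 2 * n) :
    revHeight n A k ≤ 2 * n - k ∧ revHeight n A k % 2 = (2 * n - k) % 2 := by
  induction k with
  | zero => simp [revHeight]
  | succ k ih =>
    have := ih (by omega)
    simp only [revHeight, prevHeight]
    split_ifs <;> omega

lemma canonicalHeight_le (hx : x ≤ 2 * n) : canonicalHeight n A x ≤ x := by
  have := (revHeight_le (A := A) (Nat.sub_le (2 * n) x)).1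
  unfold canonicalHeight
  omega

lemma canonicalHeight_two_mul : canonicalHeight n A (2 * n) = 0 := by
  simp [canonicalHeight, revHeight]

lemma canonicalHeight_sub_one (h0 : 0 < x) (hx : x ≤ 2 * n) :
    canonicalHeight n A (x - 1) = prevHeight A x (canonicalHeight n A x) := by
  unfold canonicalHeight
  rw [show 2 * n - (x - 1) = 2 * n - x + 1 by omega, revHeight,
    show 2 * n - (2 * n - x) = x by omega]

lemma canonicalHeight_sub_one_eq_or (h0 : 0 < x) (hx : x ≤ 2 * n) :
    canonicalHeight n A (x - 1) + 1 = canonicalHeight n A x ∨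
      canonicalHeight n A (x - 1) = canonicalHeight n A x + 1 := by
  have := canonicalHeight_le (A := A) hx
  rw [canonicalHeight_sub_one h0 hx, prevHeight]
  split_ifs <;> omega

lemma mem_canonicalPath : x ∈ canonicalPath n A ↔
    (1 ≤ x ∧ x ≤ 2 * n) ∧ canonicalHeight n A (x - 1) < canonicalHeight n A x := by
  rw [canonicalPath, mem_filter, mem_Icc]

lemma canonicalPath_subset : canonicalPath n A ⊆ Icc 1 (2 * n) := filter_subset _ _

lemma ht_canonicalPath (hx : x ≤ 2 * n) : ht (canonicalPath n A) x = canonicalHeight n A x := by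
  induction x with
  | zero =>
    have := canonicalHeight_le (A := A) hx
    rw [ht_zero]
    omega
  | succ k ih =>
    have ih := ih (by omega)
    have hstep := canonicalHeight_sub_one_eq_or (A := A) (x := k + 1) (by omega) hx
    by_cases hk : k + 1 ∈ canonicalPath n A
    · have := ht_sub_one_of_mem (x := k + 1) (by omega) hk
      have := (mem_canonicalPath.1 hk).2
      simp only [Nat.add_sub_cancel] at *
      omega
    · have := ht_sub_one_of_notMem (x := k + 1) (by omega) hk
      have : ¬ canonicalHeight n A k < canonicalHeight n A (k + 1) := fun h =>
        hk (mem_canonicalPath.2 ⟨⟨by omega, hx⟩, by simpa using h⟩)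
      simp only [Nat.add_sub_cancel] at *
      omega

lemma canonicalPath_isDyck : IsDyck n (canonicalPath n A) := by
  refine ⟨canonicalPath_subset, ?_, fun x hx => by rw [ht_canonicalPath hx]; positivity⟩
  have := ht_canonicalPath (A := A) (le_refl (2 * n))
  rw [canonicalHeight_two_mul, ht_of_subset canonicalPath_subset] at this
  omega

lemma canonicalPath_sdiff_subset :
    canonicalPath n A \ A ⊆ Icc 1 (statA (canonicalPath n A)) := by
  intro x hx
  obtain ⟨hxP, hxA⟩ := mem_sdiff.1 hx
  obtain ⟨⟨h1, h2⟩, hlt⟩ := mem_canonicalPath.1 hxP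
  have hfull : canonicalHeight n A x = x := by
    by_contra hne
    rw [canonicalHeight_sub_one h1 h2, prevHeight, if_neg hne, if_neg fun h => hxA h.1] at hlt
    omega
  have hsub : Icc 1 x ⊆ canonicalPath n A := by
    rw [← ht_eq_self_iff, ht_canonicalPath h2, hfull]
  exact mem_Icc.2 ⟨h1, le_statA_iff.2 hsub⟩

lemma sdiff_canonicalPath_subset_returns (hA : A ⊆ Icc 1 (2 * n)) :
    A \ canonicalPath n A ⊆ returns n (canonicalPath n A) := by
  intro x hx
  obtain ⟨hxA, hxP⟩ := mem_sdiff.1 hx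
  obtain ⟨h1, h2⟩ := mem_Icc.1 (hA hxA)
  have hge : ¬ canonicalHeight n A (x - 1) < canonicalHeight n A x := fun h =>
    hxP (mem_canonicalPath.2 ⟨⟨h1, h2⟩, h⟩)
  have hle := canonicalHeight_le (A := A) h2
  have hzero : canonicalHeight n A x = 0 := by
    rw [canonicalHeight_sub_one h1 h2, prevHeight] at hge
    split_ifs at hge with hfull hpos
    · omega
    · omega
    · exact Nat.eq_zero_of_not_pos fun h => hpos ⟨hxA, h⟩
  exact mem_returns.2 ⟨⟨h1, h2⟩, by rw [ht_canonicalPath h2, hzero, Nat.cast_zero]⟩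

lemma ht_sub_one_eq_prevHeight (hP : IsDyck n P) (hPA : P \ A ⊆ Icc 1 (statA P))
    (hAP : A \ P ⊆ returns n P) (h0 : 0 < x) (hx : x ≤ 2 * n) {h : ℕ} (hh : ht P x = h) :
    ht P (x - 1) = prevHeight A x h := by
  unfold prevHeight
  split_ifs with hfull hpos
  · have hsub : Icc 1 (x - 1) ⊆ P :=
      (Icc_subset_Icc_right (Nat.sub_le x 1)).trans (ht_eq_self_iff.1 (by rw [hh, hfull]))
    rw [ht_eq_self_iff.2 hsub]
  · have hxP : x ∈ P := by
      by_contra hxP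
      have := (mem_returns.1 (hAP (mem_sdiff.2 ⟨hpos.1, hxP⟩))).2
      omega
    have := ht_sub_one_of_mem h0 hxP
    push_cast [Nat.one_le_iff_ne_zero.2 hpos.2.ne']
    omega
  · have hxP : x ∉ P := by
      intro hxP
      by_cases hxA : x ∈ A
      · have := ht_sub_one_of_mem h0 hxP
        have := hP.2.2 (x - 1) (by omega)
        have : ¬ 0 < h := fun h => hpos ⟨hxA, h⟩
        omega
      · have hsub := le_statA_iff.1 (mem_Icc.1 (hPA (mem_sdiff.2 ⟨hxP, hxA⟩))).2
        exact hfull (by exact_mod_cast hh.symm.trans (ht_eq_self_iff.2 hsub))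
    have := ht_sub_one_of_notMem h0 hxP
    push_cast
    omega

lemma canonicalPath_eq_of_sdiff_subset (hP : IsDyck n P) (hPA : P \ A ⊆ Icc 1 (statA P))
    (hAP : A \ P ⊆ returns n P) : canonicalPath n A = P := by
  have hrev : ∀ k ≤ 2 * n, ht P (2 * n - k) = canonicalHeight n A (2 * n - k) := by
    intro k hk
    induction k with
    | zero => simp [canonicalHeight_two_mul, ht_of_subset hP.1, hP.2.1]
    | succ k ih =>
      rw [show 2 * n - (k + 1) = 2 * n - k - 1 by omega,
        canonicalHeight_sub_one (by omega) (by omega)]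
      exact ht_sub_one_eq_prevHeight hP hPA hAP (by omega) (by omega) (ih (by omega))
  refine eq_of_ht_eq canonicalPath_subset hP.1 fun x hx => ?_
  have := hrev (2 * n - x) (by omega)
  rw [Nat.sub_sub_self hx] at this
  rw [ht_canonicalPath hx, this]

lemma canonicalPath_eq_iff (hA : A ⊆ Icc 1 (2 * n)) (hP : IsDyck n P) :
    canonicalPath n A = P ↔ P \ A ⊆ Icc 1 (statA P) ∧ A \ P ⊆ returns n P := by
  refine ⟨?_, fun h => canonicalPath_eq_of_sdiff_subset hP h.1 h.2⟩
  rintro rfl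
  exact ⟨canonicalPath_sdiff_subset, sdiff_canonicalPath_subset_returns hA⟩

lemma isDyck_Icc (n : ℕ) : IsDyck n (Icc 1 n) := by
  refine ⟨Icc_subset_Icc_right (by omega), by simp, fun x hx => ?_⟩
  have : Icc 1 n ∩ Icc 1 x = Icc 1 (min n x) := by
    ext y; simp only [mem_inter, mem_Icc]; omega
  rw [ht, this, Nat.card_Icc]
  omega

lemma bddAbove_catalanRank_set (n : ℕ) (A : Finset ℕ) :
    BddAbove {m | ∃ B, IsDyck n B ∧ #(A ∩ B) = m} := by
  refine ⟨n, ?_⟩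
  rintro m ⟨B, hB, rfl⟩
  exact hB.2.1 ▸ card_le_card inter_subset_right

lemma le_catalanRank (hB : IsDyck n B) : #(A ∩ B) ≤ catalanRank n A :=
  le_csSup (bddAbove_catalanRank_set n A) ⟨B, hB, rfl⟩

lemma catalanRank_le (h : ∀ B, IsDyck n B → #(A ∩ B) ≤ m) : catalanRank n A ≤ m := by
  refine csSup_le ⟨_, Icc 1 n, isDyck_Icc n, rfl⟩ ?_
  rintro _ ⟨B, hB, rfl⟩
  exact h B hB

lemma catalanRank_Icc : catalanRank n (Icc 1 (2 * n)) = n := by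
  refine le_antisymm (catalanRank_le fun B hB => ?_) ?_
  · rw [inter_eq_right.2 hB.1, hB.2.1]
  · have := le_catalanRank (A := Icc 1 (2 * n)) (isDyck_Icc n)
    rwa [inter_eq_right.2 (Icc_subset_Icc_right (by omega)), Nat.card_Icc,
      add_tsub_cancel_right] at this

-- A Dyck path has at least `⌈x/2⌉` up-steps among its first `x` steps.
lemma card_inter_add_le_of_isDyck (hB : IsDyck n B) (hx : x ≤ 2 * n) :
    #(A ∩ B) + (x + 1) / 2 ≤ #(A ∩ Icc 1 x) + n := by
  have hsplit : #(A ∩ B) ≤ #(A ∩ Icc 1 x) + #(B \ Icc 1 x) := by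
    refine (card_le_card fun y hy => ?_).trans (card_union_le _ _)
    rw [mem_inter] at hy
    by_cases hyx : y ∈ Icc 1 x
    · exact mem_union_left _ (mem_inter.2 ⟨hy.1, hyx⟩)
    · exact mem_union_right _ (mem_sdiff.2 ⟨hy.2, hyx⟩)
  have hcard := card_sdiff_add_card_inter B (Icc 1 x)
  have := hB.2.1
  have := hB.2.2 x hx
  rw [ht] at this
  omega

lemma catalanRank_of_sdiff_subset (hP : IsDyck n P) (hPA : P \ A ⊆ Icc 1 (statA P))
    (hAP : A \ P ⊆ returns n P) : catalanRank n A = n - #(P \ A) := by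
  have hinter : #(A ∩ P) = n - #(P \ A) := by
    have := card_sdiff_add_card_inter P A
    rw [inter_comm, ← hP.2.1]
    omega
  refine le_antisymm (catalanRank_le fun B hB => ?_) (hinter ▸ le_catalanRank hP)
  rcases (A \ P).eq_empty_or_nonempty with hempty | hne
  · calc #(A ∩ B) ≤ #A := card_le_card inter_subset_left
      _ = #(A ∩ P) := by rw [inter_eq_left.2 (sdiff_eq_empty_iff_subset.1 hempty)]
      _ = n - #(P \ A) := hinter
  -- The first step `m` of `A` off `P` is a return of `P`; before it, `A` agrees with `P`
  -- except for the initial up-steps `P \ A`.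
  set m := (A \ P).min' hne
  have hm : m ∈ A \ P := min'_mem _ hne
  have hmP := (mem_sdiff.1 hm).2
  obtain ⟨⟨hm1, hm2⟩, hm0⟩ := mem_returns.1 (hAP hm)
  have hhalf : 2 * #(P ∩ Icc 1 (m - 1)) = m := by
    have := ht_sub_one_of_notMem hm1 hmP
    rw [hm0, ht] at this
    omega
  have hPA' : P \ A ⊆ P ∩ Icc 1 (m - 1) := by
    have hstat : statA P < m := by
      by_contra hge
      exact hmP (le_statA_iff.1 (not_lt.1 hge) (mem_Icc.2 ⟨hm1, le_rfl⟩))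
    intro y hy
    have := mem_Icc.1 (hPA hy)
    exact mem_inter.2 ⟨(mem_sdiff.1 hy).1, mem_Icc.2 ⟨this.1, by omega⟩⟩
  have hAm : A ∩ Icc 1 (m - 1) = (P ∩ Icc 1 (m - 1)) \ (P \ A) := by
    ext y
    simp only [mem_inter, mem_sdiff, mem_Icc]
    constructor
    · rintro ⟨hyA, hy1, hy2⟩
      have hyP : y ∈ P := by
        by_contra hyP
        have : m ≤ y := min'_le (A \ P) y (mem_sdiff.2 ⟨hyA, hyP⟩)
        omega
      exact ⟨⟨hyP, hy1, hy2⟩, fun h => h.2 hyA⟩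
    · rintro ⟨⟨hyP, hy1, hy2⟩, hy⟩
      exact ⟨by_contra fun hyA => hy ⟨hyP, hyA⟩, hy1, hy2⟩
  have := card_inter_add_le_of_isDyck (A := A) hB (x := m - 1) (by omega)
  rw [hAm, card_sdiff_of_subset hPA'] at this
  have := card_le_card hPA'
  omega

lemma catalanRank_sub_and_card_sub_of_canonicalPath_eq (hA : A ⊆ Icc 1 (2 * n)) (hP : IsDyck n P)
    (h : canonicalPath n A = P) :
    catalanRank n (Icc 1 (2 * n)) - catalanRank n A = #(P \ A) ∧
      #A - catalanRank n A = #(A \ P) := by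
  obtain ⟨hPA, hAP⟩ := (canonicalPath_eq_iff hA hP).1 h
  have hrank := catalanRank_of_sdiff_subset hP hPA hAP
  have hPA_le : #(P \ A) ≤ n := hP.2.1 ▸ card_le_card sdiff_subset
  have hA_card := card_sdiff_add_card_inter A P
  have hP_card := card_sdiff_add_card_inter P A
  rw [inter_comm, hP.2.1] at hP_card
  rw [catalanRank_Icc, hrank]
  omega

lemma sum_fiber_canonicalPath {M : Type*} [AddCommMonoid M] (hP : IsDyck n P)
    (f : Finset ℕ → Finset ℕ → M) :
    ∑ A ∈ (Icc 1 (2 * n)).powerset with canonicalPath n A = P, f (P \ A) (A \ P) =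
      ∑ S ∈ (Icc 1 (statA P)).powerset, ∑ T ∈ (returns n P).powerset, f S T := by
  rw [← sum_product']
  refine sum_nbij' (fun A => (P \ A, A \ P)) (fun p => P \ p.1 ∪ p.2) ?_ ?_ ?_ ?_
    fun _ _ => rfl
  · intro A hA
    obtain ⟨hA, hAP⟩ := mem_filter.1 hA
    obtain ⟨h1, h2⟩ := (canonicalPath_eq_iff (mem_powerset.1 hA) hP).1 hAP
    exact mem_product.2 ⟨mem_powerset.2 h1, mem_powerset.2 h2⟩
  · rintro ⟨S, T⟩ hST
    obtain ⟨hS, hT⟩ := mem_product.1 hST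
    have hsub : P \ S ∪ T ⊆ Icc 1 (2 * n) :=
      union_subset (sdiff_subset.trans hP.1) ((mem_powerset.1 hT).trans (filter_subset _ _))
    refine mem_filter.2 ⟨mem_powerset.2 hsub, (canonicalPath_eq_iff hsub hP).2 ⟨?_, ?_⟩⟩
    · intro y hy
      simp only [mem_sdiff, mem_union, not_or, not_and, not_not] at hy
      exact mem_powerset.1 hS (hy.2.1 hy.1)
    · intro y hy
      simp only [mem_sdiff, mem_union] at hy
      exact mem_powerset.1 hT (hy.1.resolve_left fun h => hy.2 h.1)
  · intro A _
    ext y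
    simp only [mem_union, mem_sdiff]
    tauto
  · rintro ⟨S, T⟩ hST
    obtain ⟨hS, hT⟩ := mem_product.1 hST
    have hSP : S ⊆ P := (mem_powerset.1 hS).trans (le_statA_iff.1 le_rfl)
    have hTP : ∀ y ∈ T, y ∉ P := fun y hy => notMem_of_mem_returns hP (mem_powerset.1 hT hy)
    simp only [Prod.mk.injEq]
    constructor <;> ext y <;> simp only [mem_sdiff, mem_union] <;>
      have := @hSP y <;> have := hTP y <;> tauto

lemma sum_powerset_pow_card {α R : Type*} [CommSemiring R] (s : Finset α) (r : R) :
    ∑ t ∈ s.powerset, r ^ #t = (r + 1) ^ #s := by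
  simpa using sum_pow_mul_eq_add_pow r 1 s

end CatalanTutte

open CatalanTutte in
open scoped Classical in
theorem catalan_tutte_general (n : ℕ) :
    ∑ A ∈ (Finset.Icc 1 (2 * n)).powerset,
        (X 0 - 1 : MvPolynomial (Fin 2) ℤ) ^
            (catalanRank n (Finset.Icc 1 (2 * n)) - catalanRank n A) *
          (X 1 - 1) ^ (A.card - catalanRank n A) =
      ∑ P ∈ (Finset.Icc 1 (2 * n)).powerset.filter (IsDyck n),
        (X 0 : MvPolynomial (Fin 2) ℤ) ^ statA P * X 1 ^ statB n P := by
  rw [← sum_fiberwise_of_maps_to (g := canonicalPath n) fun A _ =>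
    mem_filter.2 ⟨mem_powerset.2 canonicalPath_subset, canonicalPath_isDyck⟩]
  refine sum_congr rfl fun P hP => ?_
  have hP := (mem_filter.1 hP).2
  calc _ = ∑ A ∈ (Icc 1 (2 * n)).powerset with canonicalPath n A = P,
        (X 0 - 1 : MvPolynomial (Fin 2) ℤ) ^ #(P \ A) * (X 1 - 1) ^ #(A \ P) := by
        refine sum_congr rfl fun A hA => ?_
        obtain ⟨hA, hAP⟩ := mem_filter.1 hA
        obtain ⟨hcorank, hnullity⟩ :=
          catalanRank_sub_and_card_sub_of_canonicalPath_eq (mem_powerset.1 hA) hP hAP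
        rw [hcorank, hnullity]
    _ = ∑ S ∈ (Icc 1 (statA P)).powerset, ∑ T ∈ (returns n P).powerset,
        (X 0 - 1 : MvPolynomial (Fin 2) ℤ) ^ #S * (X 1 - 1) ^ #T :=
      sum_fiber_canonicalPath hP fun S T => (X 0 - 1) ^ #S * (X 1 - 1) ^ #T
    _ = _ := by
      rw [← sum_mul_sum, sum_powerset_pow_card, sum_powerset_pow_card, sub_add_cancel,
        sub_add_cancel, card_returns, Nat.card_Icc, add_tsub_cancel_right]

open scoped Classical in
/-- The Tutte polynomial of the Catalan matroid (in variables `q = X 0`, `t = X 1`)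
equals the generating function of Dyck paths of length `2n` by the statistics `a, b`. -/
theorem catalan_tutte (n : ℕ) (hn : 0 < n) :
    ∑ A ∈ (Finset.Icc 1 (2 * n)).powerset,
        (X 0 - 1 : MvPolynomial (Fin 2) ℤ) ^
            (catalanRank n (Finset.Icc 1 (2 * n)) - catalanRank n A) *
          (X 1 - 1) ^ (A.card - catalanRank n A) =
      ∑ P ∈ (Finset.Icc 1 (2 * n)).powerset.filter (IsDyck n),
        (X 0 : MvPolynomial (Fin 2) ℤ) ^ statA P * X 1 ^ statB n P :=
  catalan_tutte_general n
end

section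
/- For every positive integer n, the polynomial Σ_{P Dyck path of length 2n} q^{a(P)} t^{b(P)} is symmetric in q and t; that is, Σ_P q^{a(P)} t^{b(P)} = Σ_P q^{b(P)} t^{a(P)} in ℤ[q,t]. -/
open MvPolynomial

namespace CatalanTutte

open List DyckStep

@[simp] lemma toList_zero : (0 : DyckWord).toList = [] := rfl

lemma count_U_add_count_D (l : List DyckStep) : l.count U + l.count D = l.length := by
  induction l with
  | nil => rfl
  | cons a l ih => cases a <;> simp [List.count_cons] <;> omega

/-- Initial ascent: length of the initial run of `U`s. -/
def waL (l : List DyckStep) : ℕ := (l.takeWhile (· == U)).length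

/-- Number of nonempty balanced prefixes. -/
def wbL (l : List DyckStep) : ℕ :=
  ((Finset.Icc 1 l.length).filter
    (fun x => (l.take x).count U = (l.take x).count D)).card

@[simp] lemma waL_nil : waL [] = 0 := rfl
@[simp] lemma wbL_nil : wbL [] = 0 := by simp [wbL]
@[simp] lemma waL_cons_U (l : List DyckStep) : waL (U :: l) = waL l + 1 := by
  simp [waL, List.takeWhile_cons]
@[simp] lemma waL_cons_D (l : List DyckStep) : waL (D :: l) = 0 := by
  simp [waL, List.takeWhile_cons]

lemma waL_le_length (l : List DyckStep) : waL l ≤ l.length :=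
  (l.takeWhile_prefix _).length_le

lemma takeWhile_append_cons {α : Type*} (p : α → Bool) (l : List α) (a : α) (r : List α)
    (ha : p a = false) : ((l ++ a :: r).takeWhile p) = l.takeWhile p := by
  induction l with
  | nil => simp [List.takeWhile_cons, ha]
  | cons b l ih => cases hb : p b <;> simp [List.takeWhile_cons, hb, ih]

lemma getD_of_lt_waL (l : List DyckStep) (i : ℕ) (h : i < waL l) : l.getD i D = U := by
  induction l generalizing i with
  | nil => simp at h
  | cons a l ih =>
    cases a with
    | U =>
      cases i with
      | zero => rfl
      | succ i => simpa using ih i (by simpa using h)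
    | D => simp at h

lemma getD_waL (l : List DyckStep) (h : waL l < l.length) : l.getD (waL l) D = D := by
  induction l with
  | nil => simp at h
  | cons a l ih =>
    cases a with
    | U => simpa using ih (by simpa using h)
    | D => rfl

lemma waL_decomp (A B : DyckWord) : waL (A.nest + B).toList = waL A.toList + 1 := by
  have h1 : (A.nest + B).toList = U :: (A.toList ++ (D :: B.toList)) := by
    have : (A.nest + B).toList = (U :: (A.toList ++ [D])) ++ B.toList := rfl
    rw [this]; simp
  rw [h1, waL_cons_U, waL, waL, takeWhile_append_cons _ _ _ _ (by rfl)]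

lemma wbL_append (p q : DyckWord) :
    wbL (p.toList ++ q.toList) = wbL p.toList + wbL q.toList := by
  rcases eq_or_ne p 0 with rfl | hp
  · simp
  rcases eq_or_ne q 0 with rfl | hq
  · simp
  have hp1 : 1 ≤ p.toList.length := List.length_pos_iff.mpr (DyckWord.toList_ne_nil.mpr hp)
  have hq1 : 1 ≤ q.toList.length := List.length_pos_iff.mpr (DyckWord.toList_ne_nil.mpr hq)
  simp only [wbL, List.length_append]
  have hsplit : Finset.Icc 1 (p.toList.length + q.toList.length) =
      Finset.Icc 1 p.toList.length ∪ Finset.Ioc p.toList.length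
        (p.toList.length + q.toList.length) := by
    ext z
    simp only [Finset.mem_Icc, Finset.mem_union, Finset.mem_Ioc]
    omega
  rw [hsplit, Finset.filter_union, Finset.card_union_of_disjoint]
  · congr 1
    · congr 1
      apply Finset.filter_congr
      intro x hx
      rw [Finset.mem_Icc] at hx
      have hte : (p.toList ++ q.toList).take x = p.toList.take x := by
        rw [List.take_append, show x - p.toList.length = 0 by omega,
          List.take_zero, List.append_nil]
      rw [hte]
    · have hmap : Finset.Ioc p.toList.length (p.toList.length + q.toList.length) =
          Finset.map (addLeftEmbedding p.toList.length) (Finset.Ioc 0 q.toList.length) := by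
        rw [Finset.map_add_left_Ioc, add_zero]
      rw [hmap, Finset.filter_map, Finset.card_map]
      have hIoc : Finset.Ioc 0 q.toList.length = Finset.Icc 1 q.toList.length := by
        ext y; simp only [Finset.mem_Ioc, Finset.mem_Icc]; omega
      rw [hIoc]
      congr 1
      apply Finset.filter_congr
      intro y hy
      rw [Finset.mem_Icc] at hy
      simp only [Function.comp_apply, addLeftEmbedding_apply]
      have hte : (p.toList ++ q.toList).take (p.toList.length + y) =
          p.toList ++ q.toList.take y := by
        rw [List.take_append, List.take_of_length_le (by omega),
          show p.toList.length + y - p.toList.length = y by omega]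
      rw [hte, List.count_append, List.count_append, p.count_U_eq_count_D]
      constructor <;> intro h <;> omega
  · rw [Finset.disjoint_left]
    intro a ha hb
    rw [Finset.mem_filter, Finset.mem_Icc] at ha
    rw [Finset.mem_filter, Finset.mem_Ioc] at hb
    omega

lemma wbL_nest (p : DyckWord) : wbL p.nest.toList = 1 := by
  rw [wbL, Finset.card_eq_one]
  refine ⟨p.nest.toList.length, ?_⟩
  ext x
  simp only [Finset.mem_filter, Finset.mem_Icc, Finset.mem_singleton]
  constructor
  · rintro ⟨⟨h1, h2⟩, h3⟩
    by_contra hne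
    have hlt : x < p.nest.toList.length := by omega
    have := (DyckWord.IsNested.nest (p := p)).2 (by omega) hlt
    omega
  · rintro rfl
    have hlen : 1 ≤ p.nest.toList.length := by
      have := List.length_pos_iff.mpr (DyckWord.toList_ne_nil.mpr (DyckWord.nest_ne_zero (p := p)))
      omega
    refine ⟨⟨hlen, le_refl _⟩, ?_⟩
    rw [List.take_of_length_le (le_refl _)]
    exact p.nest.count_U_eq_count_D

lemma wbL_decomp (A B : DyckWord) : wbL (A.nest + B).toList = wbL B.toList + 1 := by
  have h1 : (A.nest + B).toList = A.nest.toList ++ B.toList := rfl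
  rw [h1, wbL_append A.nest B, wbL_nest]
  omega

/-- The involution on Dyck words: `Φ(U A D B) = U Φ(B) D Φ(A)`. -/
def phi (p : DyckWord) : DyckWord :=
  if h : p = 0 then 0 else
    have := DyckWord.semilength_insidePart_lt h
    have := DyckWord.semilength_outsidePart_lt h
    (phi p.outsidePart).nest + phi p.insidePart
termination_by p.semilength

@[simp] lemma phi_zero : phi 0 = 0 := by rw [phi]; simp

lemma nest_add_ne_zero (x y : DyckWord) : x.nest + y ≠ 0 := fun hc => by
  have h1 : x.nest.toList ++ y.toList = [] := congrArg DyckWord.toList hc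
  rw [List.append_eq_nil_iff] at h1
  exact DyckWord.nest_ne_zero (DyckWord.toList_eq_nil.mp h1.1)

lemma insidePart_decomp (x y : DyckWord) : (x.nest + y).insidePart = x := by
  rw [DyckWord.insidePart_add DyckWord.nest_ne_zero, DyckWord.insidePart_nest]

lemma outsidePart_decomp (x y : DyckWord) : (x.nest + y).outsidePart = y := by
  rw [DyckWord.outsidePart_add DyckWord.nest_ne_zero, DyckWord.outsidePart_nest, zero_add]

lemma phi_decomp' {p : DyckWord} (h : p ≠ 0) :
    phi p = (phi p.outsidePart).nest + phi p.insidePart := by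
  conv_lhs => rw [phi]
  rw [dif_neg h]

lemma semilength_phi (p : DyckWord) : (phi p).semilength = p.semilength := by
  by_cases h : p = 0
  · simp [h]
  · have h1 := DyckWord.semilength_insidePart_lt h
    have h2 := DyckWord.semilength_outsidePart_lt h
    rw [phi_decomp' h, DyckWord.semilength_add, DyckWord.semilength_nest,
      semilength_phi p.outsidePart, semilength_phi p.insidePart]
    have := DyckWord.semilength_insidePart_add_semilength_outsidePart_add_one h
    omega
termination_by p.semilength

lemma phi_phi (p : DyckWord) : phi (phi p) = p := by
  by_cases h : p = 0
  · simp [h]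
  · have h1 := DyckWord.semilength_insidePart_lt h
    have h2 := DyckWord.semilength_outsidePart_lt h
    rw [phi_decomp' h, phi_decomp' (nest_add_ne_zero _ _), insidePart_decomp, outsidePart_decomp,
      phi_phi p.insidePart, phi_phi p.outsidePart]
    exact DyckWord.nest_insidePart_add_outsidePart h
termination_by p.semilength

lemma phi_stats (p : DyckWord) :
    waL (phi p).toList = wbL p.toList ∧ wbL (phi p).toList = waL p.toList := by
  by_cases h : p = 0
  · simp [h]
  · have h1 := DyckWord.semilength_insidePart_lt h
    have h2 := DyckWord.semilength_outsidePart_lt h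
    constructor
    · rw [phi_decomp' h, waL_decomp, (phi_stats p.outsidePart).1]
      conv_rhs => rw [← DyckWord.nest_insidePart_add_outsidePart h]
      rw [wbL_decomp]
    · rw [phi_decomp' h, wbL_decomp, (phi_stats p.insidePart).2]
      conv_rhs => rw [← DyckWord.nest_insidePart_add_outsidePart h]
      rw [waL_decomp]
termination_by p.semilength

/-! ### Encoding between `Finset ℕ` and lists of Dyck steps -/

/-- The list of steps of the path with up-step set `P`. -/
def listOf (n : ℕ) (P : Finset ℕ) : List DyckStep :=
  (List.range (2 * n)).map (fun i => if i + 1 ∈ P then U else D)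

@[simp] lemma length_listOf (n : ℕ) (P : Finset ℕ) : (listOf n P).length = 2 * n := by
  simp [listOf]

lemma count_U_map (P : Finset ℕ) (x : ℕ) :
    ((List.range x).map (fun i => if i + 1 ∈ P then U else D)).count U
      = (P ∩ Finset.Icc 1 x).card := by
  induction x with
  | zero => simp
  | succ x ih =>
    have hr := @List.range_succ x
    rw [Nat.succ_eq_add_one] at hr
    rw [hr, List.map_append, List.count_append, ih]
    by_cases hp : x + 1 ∈ P
    · have he : P ∩ Finset.Icc 1 (x + 1) = insert (x + 1) (P ∩ Finset.Icc 1 x) := by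
        ext y
        simp only [Finset.mem_inter, Finset.mem_Icc, Finset.mem_insert]
        constructor
        · rintro ⟨hy1, hy2, hy3⟩
          rcases Nat.lt_or_ge y (x + 1) with hl | hl
          · exact Or.inr ⟨hy1, hy2, by omega⟩
          · exact Or.inl (by omega)
        · rintro (rfl | ⟨hy1, hy2, hy3⟩)
          · exact ⟨hp, by omega, le_refl _⟩
          · exact ⟨hy1, hy2, by omega⟩
      rw [he, Finset.card_insert_of_notMem (by simp)]
      simp [hp]
    · have he : P ∩ Finset.Icc 1 (x + 1) = P ∩ Finset.Icc 1 x := by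
        ext y
        simp only [Finset.mem_inter, Finset.mem_Icc]
        constructor
        · rintro ⟨hy1, hy2, hy3⟩
          refine ⟨hy1, hy2, ?_⟩
          rcases Nat.lt_or_ge y (x + 1) with hl | hl
          · omega
          · exact absurd (show y = x + 1 by omega) (fun hc => hp (hc ▸ hy1))
        · rintro ⟨hy1, hy2, hy3⟩
          exact ⟨hy1, hy2, by omega⟩
      rw [he]
      simp [hp]

lemma count_U_take_listOf {n x : ℕ} (P : Finset ℕ) (hx : x ≤ 2 * n) :
    ((listOf n P).take x).count U = (P ∩ Finset.Icc 1 x).card := by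
  rw [listOf, ← List.map_take, List.take_range, min_eq_left hx, count_U_map]

lemma count_D_take_listOf {n x : ℕ} (P : Finset ℕ) (hx : x ≤ 2 * n) :
    ((listOf n P).take x).count D = x - (P ∩ Finset.Icc 1 x).card := by
  have h1 := count_U_add_count_D ((listOf n P).take x)
  rw [count_U_take_listOf P hx] at h1
  have h2 : ((listOf n P).take x).length = x := by
    rw [List.length_take, length_listOf]; omega
  omega

lemma getD_listOf {n i : ℕ} (P : Finset ℕ) (hi : i < 2 * n) :
    (listOf n P).getD i D = (if i + 1 ∈ P then U else D) := by
  rw [listOf, List.getD_eq_getElem _ _ (by simpa using hi)]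
  simp

/-- Recover the up-step set from a list of steps. -/
def pofL (n : ℕ) (l : List DyckStep) : Finset ℕ :=
  (Finset.Icc 1 (2 * n)).filter (fun x => l.getD (x - 1) D = U)

lemma pofL_subset (n : ℕ) (l : List DyckStep) : pofL n l ⊆ Finset.Icc 1 (2 * n) :=
  Finset.filter_subset _ _

lemma pofL_listOf {n : ℕ} {P : Finset ℕ} (hP : P ⊆ Finset.Icc 1 (2 * n)) :
    pofL n (listOf n P) = P := by
  ext x
  simp only [pofL, Finset.mem_filter, Finset.mem_Icc]
  constructor
  · rintro ⟨⟨h1, h2⟩, h3⟩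
    rw [getD_listOf P (by omega), show x - 1 + 1 = x by omega] at h3
    by_contra hx
    simp [hx] at h3
  · intro hx
    have hb := hP hx
    rw [Finset.mem_Icc] at hb
    refine ⟨hb, ?_⟩
    rw [getD_listOf P (by omega), show x - 1 + 1 = x by omega, if_pos hx]

lemma listOf_pofL {n : ℕ} {l : List DyckStep} (hl : l.length = 2 * n) :
    listOf n (pofL n l) = l := by
  apply List.ext_getElem (by simp [hl])
  intro i h1 h2
  simp only [listOf, List.getElem_map, List.getElem_range]
  by_cases hmem : i + 1 ∈ pofL n l
  · rw [if_pos hmem]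
    have h3 := (Finset.mem_filter.mp hmem).2
    rw [show i + 1 - 1 = i by omega, List.getD_eq_getElem l D h2] at h3
    exact h3.symm
  · rw [if_neg hmem]
    cases hc : l[i] with
    | D => rfl
    | U =>
      exfalso
      apply hmem
      refine Finset.mem_filter.mpr ⟨Finset.mem_Icc.mpr ⟨by omega, by omega⟩, ?_⟩
      rw [show i + 1 - 1 = i by omega, List.getD_eq_getElem l D h2, hc]

lemma count_U_listOf {n : ℕ} {P : Finset ℕ} (h : IsDyck n P) : (listOf n P).count U = n := by
  have h1 : (listOf n P).take (2 * n) = listOf n P :=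
    List.take_of_length_le (by simp)
  have h2 := count_U_take_listOf (n := n) P (le_refl (2 * n))
  rw [h1, Finset.inter_eq_left.mpr h.1, h.2.1] at h2
  exact h2

lemma count_D_listOf {n : ℕ} {P : Finset ℕ} (h : IsDyck n P) : (listOf n P).count D = n := by
  have h1 := count_U_add_count_D (listOf n P)
  rw [count_U_listOf h, length_listOf] at h1
  omega

/-- The Dyck word of a Dyck path. -/
def toWordD (n : ℕ) (P : Finset ℕ) (h : IsDyck n P) : DyckWord where
  toList := listOf n P
  count_U_eq_count_D := by rw [count_U_listOf h, count_D_listOf h]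
  count_D_le_count_U := by
    intro i
    rcases le_or_gt i (2 * n) with hi | hi
    · have h2 := count_U_take_listOf (n := n) P hi
      have h3 := count_D_take_listOf (n := n) P hi
      have hht := h.2.2 i hi
      unfold ht at hht
      have hcle : (P ∩ Finset.Icc 1 i).card ≤ i := by
        calc (P ∩ Finset.Icc 1 i).card ≤ (Finset.Icc 1 i).card :=
              Finset.card_le_card Finset.inter_subset_right
          _ = i := by rw [Nat.card_Icc]; omega
      omega
    · rw [List.take_of_length_le (by rw [length_listOf]; omega)]
      rw [count_U_listOf h, count_D_listOf h]

lemma semilength_toWordD {n : ℕ} {P : Finset ℕ} (h : IsDyck n P) :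
    (toWordD n P h).semilength = n := count_U_listOf h

lemma toList_toWordD {n : ℕ} {P : Finset ℕ} (h : IsDyck n P) :
    (toWordD n P h).toList = listOf n P := rfl

lemma isDyck_pofL {n : ℕ} (w : DyckWord) (hw : w.semilength = n) :
    IsDyck n (pofL n w.toList) := by
  have hlen : w.toList.length = 2 * n := by
    rw [← DyckWord.two_mul_semilength_eq_length, hw]
  have hkey : listOf n (pofL n w.toList) = w.toList := listOf_pofL hlen
  have hsub : pofL n w.toList ⊆ Finset.Icc 1 (2 * n) := pofL_subset n w.toList
  refine ⟨hsub, ?_, ?_⟩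
  · have h2 := count_U_take_listOf (n := n) (pofL n w.toList) (le_refl (2 * n))
    rw [List.take_of_length_le (by simp), hkey, Finset.inter_eq_left.mpr hsub] at h2
    rw [← h2, ← hw]
    rfl
  · intro x hx
    have h2 := count_U_take_listOf (n := n) (pofL n w.toList) hx
    have h3 := count_D_take_listOf (n := n) (pofL n w.toList) hx
    rw [hkey] at h2 h3
    have h4 := w.count_D_le_count_U x
    have h5 := count_U_add_count_D (w.toList.take x)
    have h6 : (w.toList.take x).length = x := by rw [List.length_take, hlen]; omega
    unfold ht
    omega

lemma statA_eq (P : Finset ℕ) (m : ℕ) (h1 : Finset.Icc 1 m ⊆ P) (h2 : m + 1 ∉ P) :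
    statA P = m := by
  have hub : ∀ k ∈ {k : ℕ | Finset.Icc 1 k ⊆ P}, k ≤ m := by
    intro k hk
    by_contra hx
    exact h2 (hk (Finset.mem_Icc.mpr ⟨by omega, by omega⟩))
  apply _root_.le_antisymm
  · exact csSup_le ⟨0, by
      show Finset.Icc 1 0 ⊆ P
      rw [Finset.Icc_eq_empty (by omega)]
      exact Finset.empty_subset P⟩ hub
  · exact le_csSup ⟨m, fun k hk => hub k hk⟩ h1

lemma statA_listOf {n : ℕ} {P : Finset ℕ} (h : IsDyck n P) : statA P = waL (listOf n P) := by
  have hml : waL (listOf n P) ≤ 2 * n := by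
    have := waL_le_length (listOf n P)
    rwa [length_listOf] at this
  apply statA_eq
  · intro x hx
    rw [Finset.mem_Icc] at hx
    have hi : x - 1 < waL (listOf n P) := by omega
    have hU := getD_of_lt_waL (listOf n P) (x - 1) hi
    rw [getD_listOf P (by omega), show x - 1 + 1 = x by omega] at hU
    by_contra hx'
    simp [hx'] at hU
  · rcases eq_or_lt_of_le hml with he | hlt
    · intro hc
      have := h.1 hc
      rw [Finset.mem_Icc] at this
      omega
    · have hD := getD_waL (listOf n P) (by rwa [length_listOf])
      rw [getD_listOf P hlt] at hD
      intro hc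
      simp [hc] at hD
  
lemma statB_listOf {n : ℕ} {P : Finset ℕ} (h : IsDyck n P) : statB n P = wbL (listOf n P) := by
  rw [statB, wbL, length_listOf]
  congr 1
  apply Finset.filter_congr
  intro x hx
  rw [Finset.mem_Icc] at hx
  have h2 := count_U_take_listOf (n := n) P hx.2
  have h3 := count_D_take_listOf (n := n) P hx.2
  have hcle : (P ∩ Finset.Icc 1 x).card ≤ x := by
    calc (P ∩ Finset.Icc 1 x).card ≤ (Finset.Icc 1 x).card :=
          Finset.card_le_card Finset.inter_subset_right
      _ = x := by rw [Nat.card_Icc]; omega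
  rw [h2, h3]
  unfold ht
  constructor <;> intro hh <;> omega

open scoped Classical in
/-- The involution on Dyck paths induced by `phi`. -/
noncomputable def psi (n : ℕ) (P : Finset ℕ) : Finset ℕ :=
  if h : IsDyck n P then pofL n (phi (toWordD n P h)).toList else P

section PsiLemmas

variable {n : ℕ} {P : Finset ℕ} (h : IsDyck n P)

include h

lemma psi_val : psi n P = pofL n (phi (toWordD n P h)).toList := dif_pos h

lemma semilength_phi_toWordD : (phi (toWordD n P h)).semilength = n := by
  rw [semilength_phi, semilength_toWordD]

lemma isDyck_psi : IsDyck n (psi n P) := by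
  rw [psi_val h]
  exact isDyck_pofL _ (semilength_phi_toWordD h)

lemma listOf_psi : listOf n (psi n P) = (phi (toWordD n P h)).toList := by
  rw [psi_val h]
  exact listOf_pofL (by rw [← DyckWord.two_mul_semilength_eq_length, semilength_phi_toWordD h])

lemma toWordD_psi : toWordD n (psi n P) (isDyck_psi h) = phi (toWordD n P h) :=
  DyckWord.ext (by rw [toList_toWordD, listOf_psi h])

lemma psi_psi : psi n (psi n P) = P := by
  rw [psi_val (isDyck_psi h), toWordD_psi h, phi_phi, toList_toWordD, pofL_listOf h.1]

lemma statA_psi : statA (psi n P) = statB n P := by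
  rw [statA_listOf (isDyck_psi h), listOf_psi h, (phi_stats _).1, toList_toWordD,
    ← statB_listOf h]

lemma statB_psi : statB n (psi n P) = statA P := by
  rw [statB_listOf (isDyck_psi h), listOf_psi h, (phi_stats _).2, toList_toWordD,
    ← statA_listOf h]

end PsiLemmas

end CatalanTutte

open scoped Classical in
/-- The generating polynomial `Σ_P q^{a(P)} t^{b(P)}` over Dyck paths of length `2n`
is symmetric in `q` and `t`. -/
theorem catalan_tutte_symmetric (n : ℕ) (hn : 0 < n) :
    ∑ P ∈ (Finset.Icc 1 (2 * n)).powerset.filter (IsDyck n),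
        (X 0 : MvPolynomial (Fin 2) ℤ) ^ statA P * X 1 ^ statB n P =
      ∑ P ∈ (Finset.Icc 1 (2 * n)).powerset.filter (IsDyck n),
        (X 0 : MvPolynomial (Fin 2) ℤ) ^ statB n P * X 1 ^ statA P := by
  have hmem : ∀ P, P ∈ (Finset.Icc 1 (2 * n)).powerset.filter (IsDyck n) ↔ IsDyck n P := by
    intro P
    simp only [Finset.mem_filter, Finset.mem_powerset]
    exact ⟨fun hp => hp.2, fun hp => ⟨hp.1, hp⟩⟩
  refine Finset.sum_nbij' (i := fun P => CatalanTutte.psi n P) (j := fun P => CatalanTutte.psi n P)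
    ?_ ?_ ?_ ?_ ?_
  · intro P hP
    exact (hmem _).mpr (CatalanTutte.isDyck_psi ((hmem _).mp hP))
  · intro P hP
    exact (hmem _).mpr (CatalanTutte.isDyck_psi ((hmem _).mp hP))
  · intro P hP
    exact CatalanTutte.psi_psi ((hmem _).mp hP)
  · intro P hP
    exact CatalanTutte.psi_psi ((hmem _).mp hP)
  · intro P hP
    have h := (hmem _).mp hP
    rw [CatalanTutte.statA_psi h, CatalanTutte.statB_psi h]
end

section
/- Let S = {s_1 < s_2 < ⋯ < s_n} be a set of positive integers, and let ℬ_S be the collection of all n-element sets {a_1 < a_2 < ⋯ < a_n} of positive integers with a_i ≤ s_i for each 1 ≤ i ≤ n. Then ℬ_S is the collection of bases of a matroid on {1,…,s_n}; concretely, ℬ_S is nonempty, and for any A, B ∈ ℬ_S and any a ∈ A \ B there exists b ∈ B \ A such that (A \ {a}) ∪ {b} ∈ ℬ_S. -/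
/-- `A` is a basis of the shifted matroid `SM(s_0, …, s_{n-1})`: an `n`-element set of
positive integers whose `i`-th smallest element is at most `s i`. -/
def IsShiftedBasis (n : ℕ) (s : Fin n → ℕ) (A : Finset ℕ) : Prop :=
  (∀ a ∈ A, 0 < a) ∧ ∃ h : A.card = n, ∀ i : Fin n, (A.orderIsoOfFin h i : ℕ) ≤ s i

/-!
Order-statistic bounds become counting conditions: the `i`-th smallest element of `A` is at most
`t` iff more than `i` elements of `A` are at most `t`. For the exchange, take `b` to be the least
element of `B \ A`. Every element of `B` below `b` lies in `A.erase a`, so thresholds `t < b` are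
met by `insert b (A.erase a)` because they are met by `B`; at thresholds `t ≥ b`, adding `b`
compensates for the possible loss of `a`, so they are met because they are met by `A`.
-/

open Finset

theorem Fin.lt_card_filter_le_iff {α : Type*} [LinearOrder α] {n : ℕ} {g : Fin n → α}
    (hg : Monotone g) (i : Fin n) (t : α) :
    (i : ℕ) < #{j | g j ≤ t} ↔ g i ≤ t := by
  constructor
  · intro hi
    by_contra! hti
    have hsub : ({j | g j ≤ t} : Finset (Fin n)) ⊆ Iio i := fun j hj => by
      simp only [mem_filter, mem_univ, true_and] at hj
      exact mem_Iio.2 (hg.reflect_lt (hj.trans_lt hti))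
    have := card_le_card hsub
    rw [Fin.card_Iio] at this
    omega
  · intro hit
    have hsub : Iic i ⊆ ({j | g j ≤ t} : Finset (Fin n)) := fun j hj => by
      simpa using (hg (mem_Iic.1 hj)).trans hit
    have := card_le_card hsub
    rw [Fin.card_Iic] at this
    omega

theorem Finset.orderEmbOfFin_le_iff_lt_card_filter {α : Type*} [LinearOrder α] {n : ℕ}
    (A : Finset α) (h : #A = n) (i : Fin n) (t : α) :
    A.orderEmbOfFin h i ≤ t ↔ (i : ℕ) < #{a ∈ A | a ≤ t} := by
  set g := A.orderEmbOfFin h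
  have hcount : #{a ∈ A | a ≤ t} = #{j | g j ≤ t} := by
    rw [← A.image_orderEmbOfFin_univ h, filter_image, card_image_of_injective _ g.injective]
  rw [hcount, Fin.lt_card_filter_le_iff g.monotone]

theorem isShiftedBasis_iff_lt_card_filter {n : ℕ} {s : Fin n → ℕ} {A : Finset ℕ} :
    IsShiftedBasis n s A ↔
      (∀ a ∈ A, 0 < a) ∧ #A = n ∧ ∀ i : Fin n, (i : ℕ) < #{a ∈ A | a ≤ s i} := by
  refine and_congr_right fun _ =>
    ⟨fun ⟨h, hle⟩ => ⟨h, fun i => ?_⟩, fun ⟨h, hlt⟩ => ⟨h, fun i => ?_⟩⟩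
  · rw [← A.orderEmbOfFin_le_iff_lt_card_filter h, ← coe_orderIsoOfFin_apply]
    exact hle i
  · rw [coe_orderIsoOfFin_apply, A.orderEmbOfFin_le_iff_lt_card_filter h]
    exact hlt i

theorem Finset.card_filter_le_card_filter_insert_erase {α : Type*} [DecidableEq α]
    (p : α → Prop) [DecidablePred p] {A : Finset α} (a : α) {b : α} (hb : b ∉ A)
    (hpb : p b) :
    #{x ∈ A | p x} ≤ #{x ∈ insert b (A.erase a) | p x} := by
  have hb' : b ∉ {x ∈ A.erase a | p x} := fun h =>
    hb (mem_of_mem_erase (mem_filter.1 h).1)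
  rw [filter_insert, if_pos hpb, card_insert_of_notMem hb', filter_erase]
  have := pred_card_le_card_erase (s := {x ∈ A | p x}) (a := a)
  omega

theorem isShiftedBasis_insert_min'_erase {n : ℕ} {s : Fin n → ℕ} {A B : Finset ℕ}
    (hA : IsShiftedBasis n s A) (hB : IsShiftedBasis n s B) {a : ℕ} (ha : a ∈ A \ B)
    (hBA : (B \ A).Nonempty) : IsShiftedBasis n s (insert ((B \ A).min' hBA) (A.erase a)) := by
  obtain ⟨hApos, hAcard, hAlt⟩ := isShiftedBasis_iff_lt_card_filter.1 hA
  obtain ⟨hBpos, -, hBlt⟩ := isShiftedBasis_iff_lt_card_filter.1 hB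
  set b := (B \ A).min' hBA
  obtain ⟨hbB, hbA⟩ := mem_sdiff.1 ((B \ A).min'_mem hBA)
  obtain ⟨haA, haB⟩ := mem_sdiff.1 ha
  refine isShiftedBasis_iff_lt_card_filter.2 ⟨?_, ?_, fun i => ?_⟩
  · intro x hx
    rcases mem_insert.1 hx with rfl | hx
    exacts [hBpos _ hbB, hApos _ (mem_of_mem_erase hx)]
  · rw [card_insert_of_notMem fun h => hbA (mem_of_mem_erase h), card_erase_of_mem haA, hAcard]
    have := hAcard ▸ card_pos.2 ⟨a, haA⟩
    omega
  by_cases hbt : b ≤ s i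
  · exact (hAlt i).trans_le (card_filter_le_card_filter_insert_erase _ a hbA hbt)
  · have hsub : {x ∈ B | x ≤ s i} ⊆ {x ∈ insert b (A.erase a) | x ≤ s i} := by
      intro x hx
      obtain ⟨hxB, hxt⟩ := mem_filter.1 hx
      have hxA : x ∈ A := by
        by_contra hxA
        exact hbt (((B \ A).min'_le x (mem_sdiff.2 ⟨hxB, hxA⟩)).trans hxt)
      have hxa : x ≠ a := ne_of_mem_of_not_mem hxB haB
      exact mem_filter.2 ⟨mem_insert_of_mem (mem_erase.2 ⟨hxa, hxA⟩), hxt⟩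
    exact (hBlt i).trans_le (card_le_card hsub)

theorem IsShiftedBasis.exchange {n : ℕ} {s : Fin n → ℕ} {A B : Finset ℕ}
    (hA : IsShiftedBasis n s A) (hB : IsShiftedBasis n s B) {a : ℕ} (ha : a ∈ A \ B) :
    ∃ b ∈ B \ A, IsShiftedBasis n s (insert b (A.erase a)) := by
  have hBA : (B \ A).Nonempty := by
    rw [← card_pos, card_sdiff_comm (hB.2.1.trans hA.2.1.symm)]
    exact card_pos.2 ⟨a, ha⟩
  exact ⟨_, (B \ A).min'_mem hBA, isShiftedBasis_insert_min'_erase hA hB ha hBA⟩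

theorem isShiftedBasis_Icc_one {n : ℕ} {s : Fin n → ℕ} (hs : StrictMono s)
    (hpos : ∀ i, 0 < s i) : IsShiftedBasis n s (Icc 1 n) := by
  refine isShiftedBasis_iff_lt_card_filter.2
    ⟨fun a ha => (mem_Icc.1 ha).1, by simp, fun i => ?_⟩
  have hsi : (i : ℕ) < s i := by
    have hsub : (Iic i).image s ⊆ Icc 1 (s i) := fun x hx => by
      obtain ⟨j, hj, rfl⟩ := mem_image.1 hx
      exact mem_Icc.2 ⟨hpos j, hs.monotone (mem_Iic.1 hj)⟩
    have := card_le_card hsub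
    rw [card_image_of_injective _ hs.injective, Fin.card_Iic, Nat.card_Icc] at this
    omega
  have hsub : Icc 1 ((i : ℕ) + 1) ⊆ {a ∈ Icc 1 n | a ≤ s i} := fun x hx => by
    simp only [mem_Icc, mem_filter] at hx ⊢
    omega
  have := card_le_card hsub
  rw [Nat.card_Icc] at this
  omega

theorem shifted_is_matroid_general (n : ℕ) (s : Fin n → ℕ)
    (hs : StrictMono s) (hpos : ∀ i, 0 < s i) :
    (∃ A : Finset ℕ, IsShiftedBasis n s A) ∧
    ∀ A B : Finset ℕ, IsShiftedBasis n s A → IsShiftedBasis n s B → ∀ a ∈ A \ B,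
      ∃ b ∈ B \ A, IsShiftedBasis n s (insert b (A.erase a)) :=
  ⟨⟨_, isShiftedBasis_Icc_one hs hpos⟩, fun _ _ hA hB _ ha => hA.exchange hB ha⟩

/-- For a set `s_0 < s_1 < ⋯ < s_{n-1}` of positive integers, the collection of
`n`-element sets `{a_1 < ⋯ < a_n}` of positive integers with `a_i ≤ s_i` for each `i`
is the collection of bases of a matroid: it is nonempty and satisfies the basis
exchange axiom. -/
theorem shifted_is_matroid (n : ℕ) (hn : 0 < n) (s : Fin n → ℕ)
    (hs : StrictMono s) (hpos : ∀ i, 0 < s i) :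
    (∃ A : Finset ℕ, IsShiftedBasis n s A) ∧
    ∀ A B : Finset ℕ, IsShiftedBasis n s A → IsShiftedBasis n s B → ∀ a ∈ A \ B,
      ∃ b ∈ B \ A, IsShiftedBasis n s (insert b (A.erase a)) :=
  shifted_is_matroid_general n s hs hpos
end

section
/- Let λ be a partition of N with conjugate partition λ' and with n = λ_1 parts in its first row, and set s_i = 1 + λ'_1 + ⋯ + λ'_{i−1} for 1 ≤ i ≤ n. Then the collection of first row sets of all standard Young tableaux of shape λ equals the collection of bases of the shifted matroid SM(s_1,…,s_n); that is, a set {b_1 < ⋯ < b_n} ⊆ {1,…,N} is the first row set of some standard Young tableau of shape λ if and only if b_i ≤ s_i for all 1 ≤ i ≤ n. -/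
/-- A standard Young tableau of shape `μ`: a bijective filling of the cells of `μ`
(cells are pairs `(row, column)`, 0-indexed) by the values `{1, …, |μ|}` which is
increasing along each row and down each column. -/
structure StandardYT (μ : YoungDiagram) where
  toFun : ℕ × ℕ → ℕ
  bijOn : Set.BijOn toFun (μ.cells : Set (ℕ × ℕ)) (Set.Icc 1 μ.cells.card)
  row_lt : ∀ i j1 j2 : ℕ, j1 < j2 → (i, j2) ∈ μ → toFun (i, j1) < toFun (i, j2)
  col_lt : ∀ i1 i2 j : ℕ, i1 < i2 → (i2, j) ∈ μ → toFun (i1, j) < toFun (i2, j)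

open Finset

lemma Finset.orderEmbOfFin_eq_nth (s : Finset ℕ) {k : ℕ} (h : #s = k) (i : Fin k) :
    s.orderEmbOfFin h i = Nat.nth (· ∈ s) i := by
  have hf : (Set.ofPred (· ∈ s)).Finite := s.finite_toSet
  have hk : #hf.toFinset = k := by simpa using h
  exact (congrFun (orderEmbOfFin_unique h (f := fun i => Nat.nth (· ∈ s) i)
    (fun i => Nat.nth_mem_of_lt_card hf (hk ▸ i.2))
    (fun _ j hij => Nat.nth_lt_nth_of_lt_card hf hij (hk ▸ j.2))) i).symm

namespace Nat

lemma setOf_pos_notMem_infinite (s : Finset ℕ) :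
    (Set.ofPred fun x => 0 < x ∧ x ∉ s).Infinite := by
  have : (Set.ofPred fun x => 0 < x ∧ x ∉ s) = (insert 0 (s : Set ℕ))ᶜ := by
    ext x
    show 0 < x ∧ x ∉ s ↔ _
    simp [pos_iff_ne_zero]
  rw [this]
  exact (s.finite_toSet.insert 0).infinite_compl

lemma count_pos_notMem_add_count_mem {s : Finset ℕ} (hs : ∀ a ∈ s, 0 < a) (x : ℕ) :
    count (fun y => 0 < y ∧ y ∉ s) (x + 1) + count (· ∈ s) (x + 1) = x := by
  induction x with
  | zero => simpa [count_succ] using fun h => (hs 0 h).false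
  | succ x ih =>
    rw [count_succ _ (x + 1), count_succ _ (x + 1)]
    grind

lemma count_mem_of_forall_lt {s : Finset ℕ} {x : ℕ} (h : ∀ a ∈ s, a < x) :
    count (· ∈ s) x = #s := by
  rw [count_eq_card_filter_range]
  congr 1
  ext a
  simpa using fun ha => h a ha

lemma nth_mem_lt_nth_pos_notMem {s : Finset ℕ} (hs : ∀ a ∈ s, 0 < a) {j m : ℕ}
    (hj : j < #s) (h : nth (· ∈ s) j ≤ m + j + 1) :
    nth (· ∈ s) j < nth (fun x => 0 < x ∧ x ∉ s) m := by
  have hcount := count_pos_notMem_add_count_mem hs (nth (· ∈ s) j)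
  rw [count_nth_succ fun hf => by simpa using hj] at hcount
  exact (count_le_iff_le_nth (setOf_pos_notMem_infinite s) (a := nth (· ∈ s) j + 1)).1 (by omega)

lemma nth_pos_notMem_le {s : Finset ℕ} (hs : ∀ a ∈ s, 0 < a) {N k : ℕ}
    (hN : ∀ a ∈ s, a ≤ N) (hk : k < N - #s) : nth (fun x => 0 < x ∧ x ∉ s) k ≤ N := by
  have hcount := count_pos_notMem_add_count_mem hs N
  rw [count_mem_of_forall_lt fun a ha => Nat.lt_succ_of_le (hN a ha)] at hcount
  exact Nat.le_of_lt_succ (nth_lt_of_lt_count (n := N + 1) (by omega))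

end Nat

namespace YoungDiagram

variable (μ : YoungDiagram)

lemma snd_lt_rowLen_zero {i j : ℕ} (h : (i, j) ∈ μ) : j < μ.rowLen 0 :=
  mem_iff_lt_rowLen.1 (μ.up_left_mem (Nat.zero_le i) le_rfl h)

lemma colLen_pos {j : ℕ} (hj : j < μ.rowLen 0) : 0 < μ.colLen j :=
  mem_iff_lt_colLen.1 (mem_iff_lt_rowLen.2 hj)

lemma card_filter_snd_lt (j : ℕ) :
    #{p ∈ μ.cells | p.2 < j} = ∑ k ∈ range j, μ.colLen k := by
  have : {p ∈ μ.cells | p.2 < j} = (range j).biUnion μ.col := by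
    ext ⟨a, b⟩
    simp [mem_col_iff, and_comm]
  rw [this, card_biUnion]
  · exact sum_congr rfl fun k _ => μ.colLen_eq_card.symm
  · intro k _ l _ hkl
    simp only [Function.onFun, disjoint_left, mem_col_iff]
    rintro p ⟨-, rfl⟩ ⟨-, h⟩
    exact hkl h

lemma sum_colLen_eq_card : ∑ k ∈ range (μ.rowLen 0), μ.colLen k = #μ.cells := by
  rw [← card_filter_snd_lt, filter_true_of_mem]
  rintro ⟨i, j⟩ h
  exact μ.snd_lt_rowLen_zero ((μ.mem_cells _).1 h)

def shiftedBound (i : Fin (μ.rowLen 0)) : ℕ := 1 + ∑ j ∈ range i, μ.colLen j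

lemma shiftedBound_le_card (i : Fin (μ.rowLen 0)) : μ.shiftedBound i ≤ #μ.cells := by
  have hsub : ∑ k ∈ range (i + 1), μ.colLen k ≤ ∑ k ∈ range (μ.rowLen 0), μ.colLen k :=
    sum_le_sum_of_subset (range_subset_range.2 i.2)
  rw [sum_range_succ, sum_colLen_eq_card] at hsub
  have := μ.colLen_pos i.2
  simp only [shiftedBound]
  omega

/-- The position, counted from `0`, of a cell below the first row when these cells are listed
column by column, each column from top to bottom. -/
def lowerIndex (p : ℕ × ℕ) : ℕ := ∑ k ∈ range p.2, (μ.colLen k - 1) + (p.1 - 1)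

lemma lowerIndex_lt_lowerIndex_of_snd_lt {i j i' j' : ℕ} (h : (i, j) ∈ μ) (hi : 0 < i)
    (hj : j < j') : μ.lowerIndex (i, j) < μ.lowerIndex (i', j') := by
  have hcol := mem_iff_lt_colLen.1 h
  have hmono : ∑ k ∈ range (j + 1), (μ.colLen k - 1) ≤ ∑ k ∈ range j', (μ.colLen k - 1) :=
    sum_le_sum_of_subset (range_subset_range.2 hj)
  rw [sum_range_succ] at hmono
  simp only [lowerIndex]
  omega

lemma lowerIndex_injOn : Set.InjOn μ.lowerIndex {p | p ∈ μ ∧ 0 < p.1} := by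
  rintro ⟨i, j⟩ ⟨hp, hi⟩ ⟨i', j'⟩ ⟨hq, hi'⟩ h
  rcases lt_trichotomy j j' with hj | rfl | hj
  · exact absurd h (μ.lowerIndex_lt_lowerIndex_of_snd_lt hp hi hj).ne
  · simp only [lowerIndex] at h hi hi'
    simp only [Prod.mk.injEq, and_true]
    omega
  · exact absurd h (μ.lowerIndex_lt_lowerIndex_of_snd_lt hq hi' hj).ne'

lemma lowerIndex_one_add {j : ℕ} (hj : j ≤ μ.rowLen 0) :
    μ.lowerIndex (1, j) + j = ∑ k ∈ range j, μ.colLen k :=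
  calc μ.lowerIndex (1, j) + j = ∑ k ∈ range j, (μ.colLen k - 1 + 1) := by
        simp [lowerIndex, sum_add_distrib]
    _ = _ := sum_congr rfl fun k hk =>
        Nat.sub_add_cancel (μ.colLen_pos ((mem_range.1 hk).trans_le hj))

lemma lowerIndex_lt_card_sub_rowLen {i j : ℕ} (h : (i, j) ∈ μ) (hi : 0 < i) :
    μ.lowerIndex (i, j) < #μ.cells - μ.rowLen 0 := by
  have hlt := μ.lowerIndex_lt_lowerIndex_of_snd_lt h hi (μ.snd_lt_rowLen_zero h) (i' := 1)
  have htotal := μ.lowerIndex_one_add le_rfl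
  rw [sum_colLen_eq_card] at htotal
  omega

end YoungDiagram

namespace IsShiftedBasis

variable {n : ℕ} {s : Fin n → ℕ} {B : Finset ℕ}

lemma card_eq (hB : IsShiftedBasis n s B) : #B = n := hB.2.1

lemma nth_le (hB : IsShiftedBasis n s B) (i : Fin n) : Nat.nth (· ∈ B) i ≤ s i := by
  obtain ⟨-, hcard, hle⟩ := hB
  simpa [B.orderEmbOfFin_eq_nth hcard] using hle i

lemma le_of_mem (hB : IsShiftedBasis n s B) {N a : ℕ} (hN : ∀ i, s i ≤ N) (ha : a ∈ B) :
    a ≤ N := by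
  obtain ⟨-, hcard, hle⟩ := hB
  simpa using (hle ((B.orderIsoOfFin hcard).symm ⟨a, ha⟩)).trans (hN _)

end IsShiftedBasis

namespace StandardYT

open YoungDiagram

variable {μ : YoungDiagram} (T : StandardYT μ)

lemma apply_mem_Icc {p : ℕ × ℕ} (hp : p ∈ μ) : T.toFun p ∈ Set.Icc 1 #μ.cells :=
  T.bijOn.mapsTo (by simpa using hp)

lemma apply_le_apply {i i' j j' : ℕ} (hi : i ≤ i') (hj : j ≤ j') (h : (i', j') ∈ μ) :
    T.toFun (i, j) ≤ T.toFun (i', j') :=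
  calc T.toFun (i, j) ≤ T.toFun (i, j') := by
        rcases hj.lt_or_eq with hj | rfl
        · exact (T.row_lt i j j' hj (μ.up_left_mem hi le_rfl h)).le
        · rfl
    _ ≤ T.toFun (i', j') := by
        rcases hi.lt_or_eq with hi | rfl
        · exact (T.col_lt i i' j' hi h).le
        · rfl

lemma apply_zero_le {j : ℕ} (h : (0, j) ∈ μ) :
    T.toFun (0, j) ≤ 1 + ∑ k ∈ range j, μ.colLen k := by
  have hmem := T.apply_mem_Icc h
  have hsub : Icc 1 (T.toFun (0, j) - 1) ⊆ {p ∈ μ.cells | p.2 < j}.image T.toFun := by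
    intro v hv
    rw [mem_Icc] at hv
    obtain ⟨⟨i', j'⟩, hp, rfl⟩ := T.bijOn.surjOn (⟨hv.1, by grind⟩ : v ∈ Set.Icc 1 #μ.cells)
    rw [mem_coe, mem_cells] at hp
    refine mem_image_of_mem _ (mem_filter.2 ⟨(mem_cells _).2 hp, ?_⟩)
    show j' < j
    by_contra! hj
    have := T.apply_le_apply (Nat.zero_le i') hj hp
    omega
  have hcard := (card_le_card hsub).trans card_image_le
  rw [Nat.card_Icc, card_filter_snd_lt] at hcard
  omega

lemma card_image_row_zero : #((μ.row 0).image T.toFun) = μ.rowLen 0 := by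
  have hrow : μ.row 0 ⊆ μ.cells := filter_subset _ _
  rw [card_image_of_injOn (T.bijOn.injOn.mono (coe_subset.2 hrow)), rowLen_eq_card]

lemma orderEmbOfFin_image_row_zero (i : Fin (μ.rowLen 0)) :
    ((μ.row 0).image T.toFun).orderEmbOfFin T.card_image_row_zero i = T.toFun (0, i) := by
  have hmem (j : Fin (μ.rowLen 0)) : (0, (j : ℕ)) ∈ μ := mem_iff_lt_rowLen.2 j.2
  refine (congrFun (orderEmbOfFin_unique T.card_image_row_zero (f := fun j => T.toFun (0, j))
    (fun j => mem_image_of_mem _ (mk_mem_row_iff.2 (hmem j)))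
    (fun j j' hj => T.row_lt 0 j j' hj (hmem j'))) i).symm

theorem isShiftedBasis_image_row_zero :
    IsShiftedBasis (μ.rowLen 0) μ.shiftedBound ((μ.row 0).image T.toFun) := by
  refine ⟨?_, T.card_image_row_zero, fun i => ?_⟩
  · simp only [mem_image, mem_row_iff]
    rintro _ ⟨p, ⟨hp, -⟩, rfl⟩
    exact (T.apply_mem_Icc hp).1
  · rw [coe_orderIsoOfFin_apply, orderEmbOfFin_image_row_zero]
    exact T.apply_zero_le (mem_iff_lt_rowLen.2 i.2)

end StandardYT

namespace YoungDiagram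

variable {μ : YoungDiagram} {B : Finset ℕ}

variable (μ B) in
noncomputable def firstRowFilling (p : ℕ × ℕ) : ℕ :=
  if p.1 = 0 then Nat.nth (· ∈ B) p.2 else Nat.nth (fun x => 0 < x ∧ x ∉ B) (μ.lowerIndex p)

@[simp]
lemma firstRowFilling_zero (j : ℕ) : μ.firstRowFilling B (0, j) = Nat.nth (· ∈ B) j :=
  if_pos rfl

lemma firstRowFilling_of_pos {i j : ℕ} (hi : 0 < i) :
    μ.firstRowFilling B (i, j) = Nat.nth (fun x => 0 < x ∧ x ∉ B) (μ.lowerIndex (i, j)) :=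
  if_neg hi.ne'

lemma firstRowFilling_mem_iff (hcard : #B = μ.rowLen 0) {i j : ℕ} (h : (i, j) ∈ μ) :
    μ.firstRowFilling B (i, j) ∈ B ↔ i = 0 := by
  rcases i.eq_zero_or_pos with rfl | hi
  · simpa using
      Nat.nth_mem_of_lt_card B.finite_toSet (by simpa [hcard] using μ.snd_lt_rowLen_zero h)
  · rw [firstRowFilling_of_pos hi]
    simpa [hi.ne'] using (Nat.nth_mem_of_infinite (Nat.setOf_pos_notMem_infinite B) _).2

lemma firstRowFilling_row_lt (hcard : #B = μ.rowLen 0) {i j j' : ℕ} (hj : j < j')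
    (h : (i, j') ∈ μ) : μ.firstRowFilling B (i, j) < μ.firstRowFilling B (i, j') := by
  rcases i.eq_zero_or_pos with rfl | hi
  · simp only [firstRowFilling_zero]
    exact Nat.nth_lt_nth_of_lt_card B.finite_toSet hj
      (by simpa [hcard] using μ.snd_lt_rowLen_zero h)
  · rw [firstRowFilling_of_pos hi, firstRowFilling_of_pos hi]
    exact Nat.nth_strictMono (Nat.setOf_pos_notMem_infinite B)
      (μ.lowerIndex_lt_lowerIndex_of_snd_lt (μ.up_left_mem le_rfl hj.le h) hi hj)

lemma firstRowFilling_col_lt (hB : IsShiftedBasis (μ.rowLen 0) μ.shiftedBound B) {i i' j : ℕ}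
    (hi : i < i') (h : (i', j) ∈ μ) :
    μ.firstRowFilling B (i, j) < μ.firstRowFilling B (i', j) := by
  have hstrict := Nat.nth_strictMono (Nat.setOf_pos_notMem_infinite B)
  rw [firstRowFilling_of_pos (by omega : 0 < i')]
  rcases i.eq_zero_or_pos with rfl | hi0
  · have hj := μ.snd_lt_rowLen_zero h
    have hle := hB.nth_le ⟨j, hj⟩
    have hstart := μ.lowerIndex_one_add hj.le
    simp only [shiftedBound] at hle
    calc μ.firstRowFilling B (0, j)
        < Nat.nth (fun x => 0 < x ∧ x ∉ B) (μ.lowerIndex (1, j)) := by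
          rw [firstRowFilling_zero]
          exact Nat.nth_mem_lt_nth_pos_notMem hB.1 (hB.card_eq ▸ hj) (by omega)
      _ ≤ _ := hstrict.monotone (by simp only [lowerIndex]; omega)
  · rw [firstRowFilling_of_pos hi0]
    exact hstrict (by simp only [lowerIndex]; omega)

lemma firstRowFilling_injOn (hcard : #B = μ.rowLen 0) :
    Set.InjOn (μ.firstRowFilling B) μ.cells := by
  rintro ⟨i, j⟩ hp ⟨i', j'⟩ hq h
  rw [mem_coe, mem_cells] at hp hq
  have hrow : i = 0 ↔ i' = 0 := by
    rw [← firstRowFilling_mem_iff hcard hp, ← firstRowFilling_mem_iff hcard hq, h]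
  rcases i.eq_zero_or_pos with rfl | hi
  · obtain rfl := hrow.1 rfl
    simp only [firstRowFilling_zero] at h
    rw [Nat.nth_injOn B.finite_toSet (by simpa [hcard] using μ.snd_lt_rowLen_zero hp)
      (by simpa [hcard] using μ.snd_lt_rowLen_zero hq) h]
  · have hi' : 0 < i' := Nat.pos_of_ne_zero fun h' => hi.ne' (hrow.2 h')
    rw [firstRowFilling_of_pos hi, firstRowFilling_of_pos hi'] at h
    exact μ.lowerIndex_injOn ⟨hp, hi⟩ ⟨hq, hi'⟩
      (Nat.nth_injective (Nat.setOf_pos_notMem_infinite B) h)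

lemma firstRowFilling_mapsTo (hB : IsShiftedBasis (μ.rowLen 0) μ.shiftedBound B) :
    Set.MapsTo (μ.firstRowFilling B) μ.cells (Set.Icc 1 #μ.cells) := by
  rintro ⟨i, j⟩ hp
  rw [mem_coe, mem_cells] at hp
  have hN a (ha : a ∈ B) : a ≤ #μ.cells := hB.le_of_mem μ.shiftedBound_le_card ha
  rcases i.eq_zero_or_pos with rfl | hi
  · have hmem := (firstRowFilling_mem_iff hB.card_eq hp).2 rfl
    exact ⟨hB.1 _ hmem, hN _ hmem⟩
  · rw [firstRowFilling_of_pos hi]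
    exact ⟨(Nat.nth_mem_of_infinite (Nat.setOf_pos_notMem_infinite B) _).1,
      Nat.nth_pos_notMem_le hB.1 hN (hB.card_eq ▸ μ.lowerIndex_lt_card_sub_rowLen hp hi)⟩

lemma firstRowFilling_bijOn (hB : IsShiftedBasis (μ.rowLen 0) μ.shiftedBound B) :
    Set.BijOn (μ.firstRowFilling B) μ.cells (Set.Icc 1 #μ.cells) := by
  refine ⟨firstRowFilling_mapsTo hB, firstRowFilling_injOn hB.card_eq, ?_⟩
  rw [← coe_Icc]
  exact surjOn_of_injOn_of_card_le _ (by simpa using firstRowFilling_mapsTo hB)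
    (firstRowFilling_injOn hB.card_eq) (by simp)

lemma image_row_zero_firstRowFilling (hcard : #B = μ.rowLen 0) :
    (μ.row 0).image (μ.firstRowFilling B) = B := by
  ext a
  simp only [mem_image, mem_row_iff]
  constructor
  · rintro ⟨⟨i, j⟩, ⟨hp, rfl⟩, rfl⟩
    exact (firstRowFilling_mem_iff hcard hp).2 rfl
  · intro ha
    obtain ⟨j, hj, rfl⟩ := Nat.exists_lt_card_finite_nth_eq B.finite_toSet ha
    refine ⟨(0, j), ⟨mem_iff_lt_rowLen.2 ?_, rfl⟩, firstRowFilling_zero j⟩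
    simpa [hcard] using hj

theorem exists_standardYT_of_isShiftedBasis
    (hB : IsShiftedBasis (μ.rowLen 0) μ.shiftedBound B) :
    ∃ T : StandardYT μ, (μ.row 0).image T.toFun = B :=
  ⟨⟨μ.firstRowFilling B, firstRowFilling_bijOn hB,
    fun _ _ _ => firstRowFilling_row_lt hB.card_eq, fun _ _ _ => firstRowFilling_col_lt hB⟩,
    image_row_zero_firstRowFilling hB.card_eq⟩

end YoungDiagram

/-- Let `λ` be a partition (Young diagram) with `n = λ_1` cells in its first row, and
set `s_i = 1 + λ'_1 + ⋯ + λ'_{i-1}` (partial sums of the conjugate partition, i.e. of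
the column lengths).  Then a set `B` is the first row set of some standard Young
tableau of shape `λ` if and only if `B` is a basis of the shifted matroid
`SM(s_1, …, s_n)`, i.e. `B = {b_1 < ⋯ < b_n}` with `b_i ≤ s_i` for all `i`. -/
theorem syt_first_row_sets (μ : YoungDiagram) (n : ℕ) (hn : n = μ.rowLen 0)
    (s : Fin n → ℕ) (hs : ∀ i : Fin n, s i = 1 + ∑ j ∈ Finset.range i, μ.colLen j)
    (B : Finset ℕ) :
    (∃ T : StandardYT μ, (μ.row 0).image T.toFun = B) ↔ IsShiftedBasis n s B := by
  subst hn
  obtain rfl : s = μ.shiftedBound := funext hs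
  exact ⟨fun ⟨T, hT⟩ => hT ▸ T.isShiftedBasis_image_row_zero,
    YoungDiagram.exists_standardYT_of_isShiftedBasis⟩
end

section
/- Let P be a finite poset with n elements and let I be an order ideal of P. Then the collection ℬ_{P,I} of I-sets of all linear extensions of P is a shifted family: if B ∈ ℬ_{P,I} and a < b are positive integers with a ∉ B and b ∈ B, then (B \ {b}) ∪ {a} ∈ ℬ_{P,I}. -/
/-!
Swapping the values `c` and `c + 1` of a linear extension `f` gives again a linear extension
unless the elements carrying them are comparable. When `c ∉ f '' I` and `c + 1 ∈ f '' I` they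
are not: the element with value `c + 1` lies in the ideal `I`, so an element below it would too.
Such a swap replaces `c + 1` by `c` in the `I`-set, and every shift `b ↦ a` of a set of naturals
is a composite of these adjacent shifts.
-/

/-- `f` is a linear extension of the finite poset `P` (with `n` elements), viewed as a
bijection from `P` onto `{1, …, n}` such that `x <_P y` implies `f x < f y`. -/
def IsLinearExtension {P : Type} [PartialOrder P] (n : ℕ) (f : P → ℕ) : Prop :=
  Set.BijOn f Set.univ (Set.Icc 1 n) ∧ ∀ x y : P, x < y → f x < f y

/-- Shifts are only required to land in `{m, m + 1, …}`; the paper's families consist of subsets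
of `{1, …, n}`, which is the case `m = 1`. -/
def IsShifted (𝓑 : Set (Set ℕ)) (m : ℕ) : Prop :=
  ∀ B ∈ 𝓑, ∀ a b, m ≤ a → a < b → a ∉ B → b ∈ B → insert a (B \ {b}) ∈ 𝓑

theorem IsShifted.of_shift_succ_mem {𝓑 : Set (Set ℕ)} {m : ℕ}
    (h𝓑 : ∀ B ∈ 𝓑, ∀ c, m ≤ c → c ∉ B → c + 1 ∈ B → insert c (B \ {c + 1}) ∈ 𝓑) :
    IsShifted 𝓑 m := by
  intro B hB a b hma hab ha hb
  induction b, hab using Nat.le_induction generalizing B with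
  | base => exact h𝓑 B hB a hma ha hb
  | succ b hab ih =>
    by_cases hbB : b ∈ B
    · -- shift `b ↦ a`, then `b + 1 ↦ b`
      have h := h𝓑 _ (ih B hB ha hbB) b (by omega) (by simp [hbB]; omega) (by simp [hb])
      convert h using 1
      ext x
      simp only [Set.mem_insert_iff, Set.mem_sdiff, Set.mem_singleton_iff]
      grind
    · -- shift `b + 1 ↦ b`, then `b ↦ a`
      have h := ih _ (h𝓑 B hB b (by omega) hbB hb) (by simp [ha]; omega) (by simp)
      convert h using 1
      ext x
      simp only [Set.mem_insert_iff, Set.mem_sdiff, Set.mem_singleton_iff]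
      grind

theorem Nat.swap_succ_lt_swap_succ {c d e : ℕ} (hde : d < e) (h : ¬(d = c ∧ e = c + 1)) :
    Equiv.swap (c + 1) c d < Equiv.swap (c + 1) c e := by
  simp only [Equiv.swap_apply_def]
  split_ifs <;> omega

theorem image_swap_succ_comp {P : Type} {f : P → ℕ} {I : Set P} {c : ℕ} (hcI : c ∉ f '' I)
    (hcI' : c + 1 ∈ f '' I) : (Equiv.swap (c + 1) c ∘ f) '' I = insert c (f '' I \ {c + 1}) := by
  rw [Set.image_comp, Equiv.image_swap_of_mem_of_notMem hcI' hcI,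
    Set.insert_sdiff_of_notMem _ (by simp)]

namespace IsLinearExtension

variable {P : Type} [PartialOrder P] {n : ℕ} {f : P → ℕ}

theorem swap_comp (hf : IsLinearExtension n f) {c : ℕ} (hc : 1 ≤ c) (hcn : c + 1 ≤ n)
    (hinc : ∀ x y, x < y → f x = c → f y ≠ c + 1) :
    IsLinearExtension n (Equiv.swap (c + 1) c ∘ f) :=
  ⟨(Equiv.bijOn_swap (by simp; omega) (by simp; omega)).comp hf.1,
    fun x y hxy => Nat.swap_succ_lt_swap_succ (hf.2 x y hxy) fun h => hinc x y hxy h.1 h.2⟩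

theorem swap_comp_of_isLowerSet (hf : IsLinearExtension n f) {I : Set P} (hI : IsLowerSet I)
    {c : ℕ} (hc : 1 ≤ c) (hcI : c ∉ f '' I) (hcI' : c + 1 ∈ f '' I) :
    IsLinearExtension n (Equiv.swap (c + 1) c ∘ f) := by
  obtain ⟨z, hzI, hz⟩ := hcI'
  have hcn : c + 1 ≤ n := (hz ▸ hf.1.mapsTo (Set.mem_univ z)).2
  refine hf.swap_comp hc hcn fun x y hxy hx hy => hcI ⟨x, hI hxy.le ?_, hx⟩
  rwa [hf.1.injOn (Set.mem_univ y) (Set.mem_univ z) (hy.trans hz.symm)]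

end IsLinearExtension

def idealSets {P : Type} [PartialOrder P] (n : ℕ) (I : Set P) : Set (Set ℕ) :=
  {B | ∃ f : P → ℕ, IsLinearExtension n f ∧ f '' I = B}

theorem isShifted_idealSets {P : Type} [PartialOrder P] {n : ℕ} {I : Set P}
    (hI : IsLowerSet I) : IsShifted (idealSets n I) 1 :=
  IsShifted.of_shift_succ_mem fun _ ⟨f, hf, hfB⟩ c hc hcB hcB' => by
    subst hfB
    exact ⟨_, hf.swap_comp_of_isLowerSet hI hc hcB hcB', image_swap_succ_comp hcB hcB'⟩

theorem ideal_sets_shifted_general {P : Type} [PartialOrder P] (n : ℕ)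
    (I : Set P) (hI : ∀ x y : P, x ≤ y → y ∈ I → x ∈ I)
    (B : Set ℕ) (f : P → ℕ) (hf : IsLinearExtension n f) (hfB : f '' I = B)
    (a b : ℕ) (hab : a < b) (ha : 0 < a) (haB : a ∉ B) (hbB : b ∈ B) :
    ∃ g : P → ℕ, IsLinearExtension n g ∧ g '' I = insert a (B \ {b}) :=
  isShifted_idealSets (fun _ _ hxy hy => hI _ _ hxy hy) B ⟨f, hf, hfB⟩ a b ha hab haB hbB

/-- For a finite poset `P` with `n` elements and an order ideal `I` of `P`, the
collection of `I`-sets of linear extensions of `P` is a shifted family: if `B` is the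
`I`-set of a linear extension and `a < b` are positive integers with `a ∉ B`, `b ∈ B`,
then `(B \ {b}) ∪ {a}` is also the `I`-set of a linear extension. -/
theorem ideal_sets_shifted {P : Type} [Fintype P] [PartialOrder P] (n : ℕ)
    (hn : Fintype.card P = n) (I : Set P) (hI : ∀ x y : P, x ≤ y → y ∈ I → x ∈ I)
    (B : Set ℕ) (f : P → ℕ) (hf : IsLinearExtension n f) (hfB : f '' I = B)
    (a b : ℕ) (hab : a < b) (ha : 0 < a) (haB : a ∉ B) (hbB : b ∈ B) :
    ∃ g : P → ℕ, IsLinearExtension n g ∧ g '' I = insert a (B \ {b}) :=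
  ideal_sets_shifted_general n I hI B f hf hfB a b hab ha haB hbB
end
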